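/- arXiv:2207.01872 — 9 statements merged into one kernel-verified Lean document; each statement's English description precedes it below -/
import Mathlib

section
/- If Y is a real-valued random variable with distribution μ satisfying ∫_{[0,∞)} x dμ(x) < ∞, t ∈ ℝ, and φ : ℝ → ℝ is a nonnegative convex function that is strictly increasing on [t,∞) with φ(t) ≠ 0, then there exists a > 0 such that E[max{0, a(Y−t)+1}] / 1 ≤ E[φ(Y)] / φ(t), i.e. the function φ_{t,a}(x) = max{0, a(x−t)+1} satisfies E[φ_{t,a}(Y)]/φ_{t,a}(t) ≤ E[φ(Y)]/φ(t). -/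
/-!
Let `s ≥ 0` be the right derivative of `φ` at `t`. The tangent line gives
`φ x / φ t ≥ max 0 ((s / φ t) (x - t) + 1)`, which settles `s > 0` pointwise. If `s = 0`, then
`φ ≥ φ t` with strict inequality right of `t`, so `E φ(Y) / φ t` exceeds `1` by a positive amount
as soon as `Y > t` with positive probability, while the hinge of slope `a` exceeds `1` in mean by
at most `a E (Y - t)⁺`, which is finite; a small `a` therefore works.
-/

open MeasureTheory Set

lemma ConvexOn.add_rightDeriv_mul_sub_le {S : Set ℝ} {φ : ℝ → ℝ} {t x : ℝ}
    (hφ : ConvexOn ℝ S φ) (ht : t ∈ interior S) (hx : x ∈ S) :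
    φ t + derivWithin φ (Ioi t) t * (x - t) ≤ φ x := by
  rcases lt_trichotomy x t with hxt | rfl | htx
  · have hslope := (hφ.slope_le_leftDeriv_of_mem_interior hx ht hxt).trans
      (hφ.leftDeriv_le_rightDeriv_of_mem_interior ht)
    rw [slope_def_field, div_le_iff₀ (sub_pos.2 hxt)] at hslope
    linarith
  · simp
  · have hslope := hφ.rightDeriv_le_slope_of_mem_interior ht hx htx
    rw [slope_def_field, le_div_iff₀ (sub_pos.2 htx)] at hslope
    linarith

lemma lintegral_ofReal_div_const {α : Type*} [MeasurableSpace α] (μ : Measure α) (f : α → ℝ)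
    {c : ℝ} (hc : 0 < c) :
    ∫⁻ x, ENNReal.ofReal (f x / c) ∂μ = (∫⁻ x, ENNReal.ofReal (f x) ∂μ) / ENNReal.ofReal c := by
  simp_rw [ENNReal.ofReal_div_of_pos hc, div_eq_mul_inv]
  exact lintegral_mul_const' _ _ (by simp [hc])

lemma exists_pos_mul_lintegral_le {α : Type*} [MeasurableSpace α] {μ : Measure α}
    {f g : α → ENNReal} (hf : AEMeasurable f μ) (hg : ∫⁻ x, g x ∂μ ≠ ⊤)
    (hgf : ∀ᵐ x ∂μ, g x ≠ 0 → f x ≠ 0) :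
    ∃ a : ℝ, 0 < a ∧ ENNReal.ofReal a * ∫⁻ x, g x ∂μ ≤ ∫⁻ x, f x ∂μ := by
  by_cases hg0 : ∫⁻ x, g x ∂μ = 0
  · exact ⟨1, one_pos, by simp [hg0]⟩
  have hf0 : ∫⁻ x, f x ∂μ ≠ 0 := by
    intro hf0
    refine hg0 (lintegral_eq_zero_of_ae_eq_zero ?_)
    filter_upwards [(lintegral_eq_zero_iff' hf).1 hf0, hgf] with x hfx hgfx
    by_contra hgx
    exact hgfx hgx hfx
  obtain ⟨a, -, ha, hle⟩ := ENNReal.lt_iff_exists_real_btwn.1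
    (ENNReal.div_pos hf0 hg : 0 < (∫⁻ x, f x ∂μ) / ∫⁻ x, g x ∂μ)
  refine ⟨a, ENNReal.ofReal_pos.1 ha, ?_⟩
  calc ENNReal.ofReal a * ∫⁻ x, g x ∂μ
      ≤ (∫⁻ x, f x ∂μ) / (∫⁻ x, g x ∂μ) * ∫⁻ x, g x ∂μ := by gcongr
    _ = ∫⁻ x, f x ∂μ := ENNReal.div_mul_cancel hg0 hg

lemma integrable_max_zero_sub_of_integrableOn_Ici {μ : Measure ℝ} [IsFiniteMeasure μ]
    (hμ : IntegrableOn (fun x : ℝ => x) (Ici 0) μ) (t : ℝ) :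
    Integrable (fun x => max 0 (x - t)) μ := by
  refine (((integrable_indicator_iff measurableSet_Ici).2 hμ).add (integrable_const |t|)).mono'
    (by fun_prop) (ae_of_all _ fun x => ?_)
  rw [Real.norm_of_nonneg (le_max_left _ _)]
  have := neg_abs_le t
  by_cases hx : 0 ≤ x
  · rw [Pi.add_apply, indicator_of_mem (show x ∈ Ici 0 from hx)]
    exact max_le (by positivity) (by linarith)
  · rw [Pi.add_apply, indicator_of_notMem (show x ∉ Ici 0 from hx)]
    exact max_le (by positivity) (by linarith)

lemma exists_lintegral_max_zero_le_of_one_le {μ : Measure ℝ} [IsProbabilityMeasure μ]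
    {t : ℝ} {ψ : ℝ → ℝ} (hμ : Integrable (fun x => max 0 (x - t)) μ) (hψ : Measurable ψ)
    (h_one_le : ∀ x, 1 ≤ ψ x) (h_one_lt : ∀ x, t < x → 1 < ψ x) :
    ∃ a : ℝ, 0 < a ∧
      ∫⁻ x, ENNReal.ofReal (max 0 (a * (x - t) + 1)) ∂μ ≤ ∫⁻ x, ENNReal.ofReal (ψ x) ∂μ := by
  obtain ⟨a, ha, hslack⟩ := exists_pos_mul_lintegral_le
    (f := fun x => ENNReal.ofReal (ψ x - 1)) (g := fun x => ENNReal.ofReal (max 0 (x - t)))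
    (by fun_prop) hμ.lintegral_lt_top.ne <| ae_of_all _ fun x hx => by
      have htx : t < x := by
        simpa [lt_max_iff] using ENNReal.ofReal_pos.1 (pos_iff_ne_zero.2 hx)
      exact (ENNReal.ofReal_pos.2 (sub_pos.2 (h_one_lt x htx))).ne'
  refine ⟨a, ha, ?_⟩
  have hhinge : ∀ x, ENNReal.ofReal (max 0 (a * (x - t) + 1))
      ≤ 1 + ENNReal.ofReal a * ENNReal.ofReal (max 0 (x - t)) := fun x => by
    rw [← ENNReal.ofReal_mul ha.le, ← ENNReal.ofReal_one,
      ← ENNReal.ofReal_add zero_le_one (by positivity)]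
    have := mul_le_mul_of_nonneg_left (le_max_right 0 (x - t)) ha.le
    exact ENNReal.ofReal_le_ofReal (max_le (by positivity) (by linarith))
  have hψ_eq : ∀ x, ENNReal.ofReal (ψ x) = 1 + ENNReal.ofReal (ψ x - 1) := fun x => by
    rw [← ENNReal.ofReal_one, ← ENNReal.ofReal_add zero_le_one (sub_nonneg.2 (h_one_le x)),
      add_sub_cancel]
  calc ∫⁻ x, ENNReal.ofReal (max 0 (a * (x - t) + 1)) ∂μ
      ≤ ∫⁻ x, 1 + ENNReal.ofReal a * ENNReal.ofReal (max 0 (x - t)) ∂μ := lintegral_mono hhinge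
    _ = 1 + ENNReal.ofReal a * ∫⁻ x, ENNReal.ofReal (max 0 (x - t)) ∂μ := by
      rw [lintegral_add_left measurable_const, lintegral_const_mul _ (by fun_prop),
        lintegral_const, measure_univ, mul_one]
    _ ≤ 1 + ∫⁻ x, ENNReal.ofReal (ψ x - 1) ∂μ := by gcongr
    _ = ∫⁻ x, ENNReal.ofReal (ψ x) ∂μ := by
      rw [lintegral_congr hψ_eq, lintegral_add_left measurable_const, lintegral_const,
        measure_univ, mul_one]

lemma exists_lintegral_max_zero_le_of_convexOn {μ : Measure ℝ} [IsProbabilityMeasure μ]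
    {t : ℝ} {ψ : ℝ → ℝ} (hμ : Integrable (fun x => max 0 (x - t)) μ)
    (hconv : ConvexOn ℝ univ ψ) (hnonneg : ∀ x, 0 ≤ ψ x) (hmono : StrictMonoOn ψ (Ici t))
    (hψt : ψ t = 1) :
    ∃ a : ℝ, 0 < a ∧
      ∫⁻ x, ENNReal.ofReal (max 0 (a * (x - t) + 1)) ∂μ ≤ ∫⁻ x, ENNReal.ofReal (ψ x) ∂μ := by
  set s := derivWithin ψ (Ioi t) t
  have htangent : ∀ x, ψ t + s * (x - t) ≤ ψ x := fun x =>
    hconv.add_rightDeriv_mul_sub_le (by simp) (mem_univ x)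
  have hs : 0 ≤ s := (hmono.monotoneOn.mono Ioi_subset_Ici_self).derivWithin_nonneg
  rcases hs.lt_or_eq with hs | hs
  · refine ⟨s, hs, lintegral_mono fun x => ENNReal.ofReal_le_ofReal ?_⟩
    exact max_le (hnonneg x) (by linarith [htangent x])
  -- A horizontal tangent puts no hinge below `ψ` pointwise; the strict increase of `ψ` past `t`
  -- leaves integral slack instead.
  · refine exists_lintegral_max_zero_le_of_one_le hμ
      (continuousOn_univ.1 (hconv.continuousOn isOpen_univ)).measurable (fun x => ?_)
      (fun x hx => hψt ▸ hmono (mem_Ici.2 le_rfl) hx.le hx)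
    simpa [← hs, hψt] using htangent x

/-- If `μ` is the distribution of `Y` with `∫_{[0,∞)} x dμ < ∞`, `t ∈ ℝ`, and `φ` is a
nonnegative convex function strictly increasing on `[t,∞)` with `φ t ≠ 0`, then some
`φ_{t,a}(x) = max {0, a(x-t)+1}` with `a > 0` satisfies
`E φ_{t,a}(Y) / φ_{t,a}(t) ≤ E φ(Y) / φ(t)` (in `[0,∞]`, note `φ_{t,a}(t) = 1`). -/
theorem stmt0 (μ : Measure ℝ) [IsProbabilityMeasure μ]
    (hInt : IntegrableOn (fun x : ℝ => x) (Set.Ici 0) μ)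
    (t : ℝ) (φ : ℝ → ℝ)
    (hconv : ConvexOn ℝ Set.univ φ)
    (hnonneg : ∀ x, 0 ≤ φ x)
    (hmono : StrictMonoOn φ (Set.Ici t))
    (hφt : φ t ≠ 0) :
    ∃ a : ℝ, 0 < a ∧
      (∫⁻ x, ENNReal.ofReal (max 0 (a * (x - t) + 1)) ∂μ)
        ≤ (∫⁻ x, ENNReal.ofReal (φ x) ∂μ) / ENNReal.ofReal (φ t) := by
  have hφt_pos : 0 < φ t := (hnonneg t).lt_of_ne' hφt
  have hconv' : ConvexOn ℝ univ fun x => φ x / φ t := by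
    simpa only [div_eq_inv_mul, smul_eq_mul] using hconv.smul (inv_nonneg.2 hφt_pos.le)
  obtain ⟨a, ha, hle⟩ := exists_lintegral_max_zero_le_of_convexOn
    (integrable_max_zero_sub_of_integrableOn_Ici hInt t) hconv'
    (fun x => div_nonneg (hnonneg x) hφt_pos.le)
    (fun x hx y hy hxy => div_lt_div_of_pos_right (hmono hx hy hxy) hφt_pos)
    (div_self hφt_pos.ne')
  exact ⟨a, ha, hle.trans_eq (lintegral_ofReal_div_const μ φ hφt_pos)⟩
end

section
/- Let Y be a real-valued random variable with non-atomic distribution μ, E[max{0,Y}] < ∞, t > E[Y], and μ((t,∞)) > 0. Then there exists a ∈ (0,∞) with ∫_{t−a⁻¹}^∞ (x−t) dμ(x) = 0, and for any such a, the value E[max{0, a(Y−t)+1}] equals P{Y > t − a⁻¹}, and this value is the global minimum over all b ∈ (0,∞) of E[max{0, b(Y−t)+1}]. -/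
/-!
The map `c ↦ ∫_{[c,∞)} (x - t) dμ` is continuous because `μ` has no atoms, positive at `c = t`,
and negative for `c` far to the left because `E[Y] < t`; so it vanishes at some `c < t`, and
`a = (t - c)⁻¹`. For such `a`, `max 0 (a (x - t) + 1)` is `a (x - t) + 1` on `[c, ∞)` and `0`
elsewhere. Since the first moment of `x - t` on `[c, ∞)` vanishes, every `b (x - t) + 1`
integrates to `μ [c, ∞)` over `[c, ∞)`, which bounds `E max{0, b (Y - t) + 1}` from below.
-/

open MeasureTheory Set Filter

section

variable {μ : Measure ℝ}

lemma integrableOn_Ici_sub_of_integrable_max_zero [IsFiniteMeasure μ]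
    (hpos : Integrable (fun x : ℝ => max 0 x) μ) (t c : ℝ) :
    IntegrableOn (fun x : ℝ => x - t) (Ici c) μ := by
  have hx : IntegrableOn (fun x : ℝ => x) (Ici c) μ := by
    refine (hpos.restrict.add (integrable_const |c|)).mono' measurable_id.aestronglyMeasurable ?_
    refine (ae_restrict_iff' measurableSet_Ici).2 (ae_of_all _ fun x (hx : c ≤ x) => ?_)
    show |x| ≤ max 0 x + |c|
    rw [abs_le]
    constructor <;> linarith [le_max_left 0 x, le_max_right 0 x, neg_abs_le c, le_abs_self c]
  exact hx.sub (integrable_const t)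

lemma integrable_max_zero_mul_sub_add [IsFiniteMeasure μ]
    (hpos : Integrable (fun x : ℝ => max 0 x) μ) {b : ℝ} (hb : 0 ≤ b) (t s : ℝ) :
    Integrable (fun x : ℝ => max 0 (b * (x - t) + s)) μ := by
  refine ((hpos.const_mul b).add (integrable_const (b * |t| + |s|))).mono'
    (by fun_prop) (ae_of_all _ fun x => ?_)
  show |max 0 (b * (x - t) + s)| ≤ b * max 0 x + (b * |t| + |s|)
  rw [abs_of_nonneg (le_max_left _ _)]
  have hbx : b * x ≤ b * max 0 x := mul_le_mul_of_nonneg_left (le_max_right 0 x) hb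
  have hbt : b * -|t| ≤ b * t := mul_le_mul_of_nonneg_left (neg_abs_le t) hb
  refine max_le (by positivity) ?_
  linarith [le_abs_self s]

lemma setIntegral_Ici_sub_self_pos [IsFiniteMeasure μ]
    (hpos : Integrable (fun x : ℝ => max 0 x) μ) {t : ℝ} (htail : 0 < μ (Ioi t)) :
    0 < ∫ x in Ici t, (x - t) ∂μ := by
  rw [setIntegral_pos_iff_support_of_nonneg_ae
    ((ae_restrict_iff' measurableSet_Ici).2 (ae_of_all _ fun x (hx : t ≤ x) => sub_nonneg.2 hx))
    (integrableOn_Ici_sub_of_integrable_max_zero hpos t t)]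
  refine htail.trans_le (measure_mono fun x (hx : t < x) => ⟨?_, hx.le⟩)
  exact sub_ne_zero.2 hx.ne'

/-- If `∫_{[c,∞)} (x - t) dμ ≥ 0` for all `c < t`, then `∫_c^t (t - x) dμ` stays below the value
at `c = t`; so `x` is integrable and its mean is at least `t`. -/
lemma exists_lt_setIntegral_Ici_sub_neg [IsProbabilityMeasure μ] [NullSingletonClass μ]
    (hpos : Integrable (fun x : ℝ => max 0 x) μ) {t : ℝ}
    (ht : (¬ Integrable (fun x : ℝ => x) μ) ∨ (∫ x, x ∂μ) < t) :
    ∃ c < t, ∫ x in Ici c, (x - t) ∂μ < 0 := by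
  by_contra! h
  set K := ∫ x in Ici t, (x - t) ∂μ
  have hf := integrableOn_Ici_sub_of_integrable_max_zero hpos t
  have hsplit : ∀ c, ∫ x in c..t, (x - t) ∂μ = (∫ x in Ici c, (x - t) ∂μ) - K := fun c =>
    (intervalIntegral.integral_Ici_sub_Ici' (hf c) (hf t)).symm
  have hbelow : ∀ᶠ c in atBot, c < t := eventually_lt_atBot t
  have hIic : IntegrableOn (fun x : ℝ => x - t) (Iic t) μ := by
    refine integrableOn_Iic_of_intervalIntegral_norm_bounded K t
      (fun c => (hf c).mono_set (Ioc_subset_Icc_self.trans Icc_subset_Ici_self)) tendsto_id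
      (hbelow.mono fun c hc => ?_)
    have hnorm : ∫ x in c..t, ‖x - t‖ ∂μ = -∫ x in c..t, (x - t) ∂μ := by
      rw [← intervalIntegral.integral_neg]
      refine intervalIntegral.integral_congr fun x hx => ?_
      rw [uIcc_of_le hc.le] at hx
      simp [abs_of_nonpos (sub_nonpos.2 hx.2)]
    rw [hnorm, hsplit]
    linarith [h c hc]
  have hint : Integrable (fun x : ℝ => x) μ := by
    have h := hIic.union ((hf t).mono_set Ioi_subset_Ici_self)
    rw [Iic_union_Ioi, integrableOn_univ] at h
    exact (h.add (integrable_const t)).congr (ae_of_all _ fun x => sub_add_cancel x t)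
  have hlow : -K ≤ ∫ x in Iic t, (x - t) ∂μ :=
    ge_of_tendsto (intervalIntegral_tendsto_integral_Iic t hIic tendsto_id)
      (hbelow.mono fun c hc => by
        show -K ≤ ∫ x in c..t, (x - t) ∂μ
        linarith [hsplit c, h c hc])
  have htotal : (∫ x in Iic t, (x - t) ∂μ) + K = (∫ x, x ∂μ) - t := by
    have h := intervalIntegral.integral_Iic_add_Ioi hIic ((hf t).mono_set Ioi_subset_Ici_self)
    rw [← integral_Ici_eq_integral_Ioi] at h
    rw [h, integral_sub hint (integrable_const t)]
    simp
  linarith [ht.resolve_left (not_not.2 hint)]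

lemma max_zero_mul_sub_add_one_eq_indicator {a : ℝ} (ha : 0 < a) (t x : ℝ) :
    max 0 (a * (x - t) + 1) = (Ici (t - a⁻¹)).indicator (fun x => a * (x - t) + 1) x := by
  have hsign : 0 ≤ a * (x - t) + 1 ↔ t - a⁻¹ ≤ x := by
    have : a * (x - t) + 1 = a * (x - (t - a⁻¹)) := by field_simp; ring
    rw [this, mul_nonneg_iff_of_pos_left ha, sub_nonneg]
  by_cases hx : x ∈ Ici (t - a⁻¹)
  · rw [indicator_of_mem hx, max_eq_right (hsign.2 hx)]
  · rw [indicator_of_notMem hx, max_eq_left (le_of_not_ge (mt hsign.1 hx))]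

lemma setIntegral_Ici_mul_sub_add_one [IsFiniteMeasure μ]
    (hpos : Integrable (fun x : ℝ => max 0 x) μ) (t c b : ℝ) :
    ∫ x in Ici c, (b * (x - t) + 1) ∂μ = b * (∫ x in Ici c, (x - t) ∂μ) + μ.real (Ici c) := by
  rw [integral_add ((integrableOn_Ici_sub_of_integrable_max_zero hpos t c).const_mul b)
    (integrable_const _), integral_const_mul, setIntegral_const, smul_eq_mul, mul_one]

section

variable [IsFiniteMeasure μ] (hpos : Integrable (fun x : ℝ => max 0 x) μ) {t a : ℝ}
  (ha : 0 < a) (hzero : ∫ x in Ici (t - a⁻¹), (x - t) ∂μ = 0)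
include hpos ha hzero

lemma integral_max_zero_eq_measureReal_of_setIntegral_eq_zero :
    ∫ x, max 0 (a * (x - t) + 1) ∂μ = μ.real (Ici (t - a⁻¹)) := by
  simp_rw [max_zero_mul_sub_add_one_eq_indicator ha t]
  rw [integral_indicator measurableSet_Ici, setIntegral_Ici_mul_sub_add_one hpos, hzero,
    mul_zero, zero_add]

lemma integral_max_zero_le_of_setIntegral_eq_zero {b : ℝ} (hb : 0 ≤ b) :
    ∫ x, max 0 (a * (x - t) + 1) ∂μ ≤ ∫ x, max 0 (b * (x - t) + 1) ∂μ := by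
  have hind : ∀ x, (Ici (t - a⁻¹)).indicator (fun x => b * (x - t) + 1) x
      ≤ max 0 (b * (x - t) + 1) := fun x => by
    by_cases hx : x ∈ Ici (t - a⁻¹)
    · rw [indicator_of_mem hx]; exact le_max_right _ _
    · rw [indicator_of_notMem hx]; exact le_max_left _ _
  calc ∫ x, max 0 (a * (x - t) + 1) ∂μ
      = ∫ x, (Ici (t - a⁻¹)).indicator (fun x => b * (x - t) + 1) x ∂μ := by
        rw [integral_max_zero_eq_measureReal_of_setIntegral_eq_zero hpos ha hzero,
          integral_indicator measurableSet_Ici, setIntegral_Ici_mul_sub_add_one hpos, hzero,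
          mul_zero, zero_add]
    _ ≤ ∫ x, max 0 (b * (x - t) + 1) ∂μ := by
        refine integral_mono ?_ (integrable_max_zero_mul_sub_add hpos hb t 1) hind
        exact (integrable_indicator_iff measurableSet_Ici).2
          (((integrableOn_Ici_sub_of_integrable_max_zero hpos t _).const_mul b).add
            (integrable_const _))

end

end

/-- Proposition 1, part II: if `μ` is a non-atomic distribution of `Y` with
`E max{0,Y} < ∞`, `t > E Y` and `μ((t,∞)) > 0`, then there is `a ∈ (0,∞)` with
`∫_{[t-a⁻¹,∞)} (x-t) dμ = 0`; for any such `a`, `E max{0, a(Y-t)+1} = P{Y > t-a⁻¹}`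
and this is the global minimum of `b ↦ E max{0, b(Y-t)+1}` over `(0,∞)`. -/
theorem stmt1 (μ : Measure ℝ) [IsProbabilityMeasure μ] [NullSingletonClass μ]
    (hpos : Integrable (fun x : ℝ => max 0 x) μ)
    (t : ℝ)
    (ht : (¬ Integrable (fun x : ℝ => x) μ) ∨ (∫ x, x ∂μ) < t)
    (htail : 0 < μ (Set.Ioi t)) :
    (∃ a : ℝ, 0 < a ∧ (∫ x in Set.Ici (t - a⁻¹), (x - t) ∂μ) = 0) ∧
    ∀ a : ℝ, 0 < a → (∫ x in Set.Ici (t - a⁻¹), (x - t) ∂μ) = 0 →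
      ((∫ x, max 0 (a * (x - t) + 1) ∂μ) = (μ (Set.Ioi (t - a⁻¹))).toReal ∧
        ∀ b : ℝ, 0 < b →
          (∫ x, max 0 (a * (x - t) + 1) ∂μ) ≤ ∫ x, max 0 (b * (x - t) + 1) ∂μ) := by
  have hK := setIntegral_Ici_sub_self_pos hpos htail
  obtain ⟨c₀, hc₀t, hc₀⟩ := exists_lt_setIntegral_Ici_sub_neg hpos ht
  obtain ⟨c, hc, hc0⟩ : ∃ c ∈ Icc c₀ t, ∫ x in Ici c, (x - t) ∂μ = 0 :=
    intermediate_value_Icc hc₀t.le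
      ((integrableOn_Ici_sub_of_integrable_max_zero hpos t c₀).continuousOn_Ici_primitive_Ici.mono
        Icc_subset_Ici_self) ⟨hc₀.le, hK.le⟩
  have hct : c < t := lt_of_le_of_ne hc.2 (by rintro rfl; exact hK.ne' hc0)
  refine ⟨⟨(t - c)⁻¹, inv_pos.2 (sub_pos.2 hct), by rwa [inv_inv, sub_sub_cancel]⟩,
    fun a ha hzero => ⟨?_, fun b hb => ?_⟩⟩
  · rw [integral_max_zero_eq_measureReal_of_setIntegral_eq_zero hpos ha hzero, ← measureReal_def,
      measureReal_congr Ioi_ae_eq_Ici]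
  · exact integral_max_zero_le_of_setIntegral_eq_zero hpos ha hzero hb.le
end

section
/- Let X and Y be real-valued random variables with E[max{0,Y}] < ∞ such that E[φ(X)] ≤ E[φ(Y)] for every function φ of the form φ(x) = max{0, a(x−t)+1} with a > 0, t ∈ ℝ. If s ∈ ℝ satisfies P{Y > s} > 0, then P{X ≥ E(Y | Y > s)} ≤ P{Y > s}, where E(Y | Y > s) = E[Y·1_{(s,∞)}(Y)] / P{Y > s}. -/
open MeasureTheory Set

/-! With `m = E(Y | Y > s)`, the test function with `a = 1`, `t = s + 1` is `x ↦ (x - s)⁺`,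
so `E(X - s)⁺ ≤ E(Y - s)⁺ = (m - s) P{Y > s}`; the latter is positive, hence `m > s`.
Markov's inequality for `(X - s)⁺` at level `m - s` then gives
`(m - s) P{X ≥ m} ≤ (m - s) P{Y > s}`. -/

section

variable {Ω : Type*}

lemma max_zero_sub_eq_indicator (Y : Ω → ℝ) (s : ℝ) :
    (fun ω => max 0 (Y ω - s)) = {ω | s < Y ω}.indicator (fun ω => Y ω - s) := by
  ext ω
  by_cases h : s < Y ω
  · simp [h, h.le]
  · simp [h, not_lt.1 h]

variable [MeasurableSpace Ω] {P : Measure Ω} {s : ℝ}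

lemma integrable_max_zero_sub [IsFiniteMeasure P] {Y : Ω → ℝ} (hY : Measurable Y)
    (hint : Integrable (fun ω => max 0 (Y ω)) P) :
    Integrable (fun ω => max 0 (Y ω - s)) P := by
  refine (hint.add (integrable_const |s|)).mono'
    (measurable_const.max (hY.sub measurable_const)).aestronglyMeasurable (ae_of_all _ fun ω => ?_)
  rw [Real.norm_of_nonneg (le_max_left _ _), Pi.add_apply]
  exact max_le (by positivity) (by linarith [le_max_right 0 (Y ω), neg_abs_le s])

lemma integral_max_zero_sub [IsFiniteMeasure P] {Y : Ω → ℝ} (hY : Measurable Y)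
    (hint : Integrable (fun ω => max 0 (Y ω - s)) P) :
    ∫ ω, max 0 (Y ω - s) ∂P
      = ∫ ω in {ω | s < Y ω}, Y ω ∂P - s * (P {ω | s < Y ω}).toReal := by
  have hA : MeasurableSet {ω | s < Y ω} := measurableSet_lt measurable_const hY
  rw [max_zero_sub_eq_indicator, integrable_indicator_iff hA] at hint
  have hYint : IntegrableOn Y {ω | s < Y ω} P :=
    (hint.add (integrableOn_const (measure_ne_top P _) (C := s))).congr_fun
      (fun ω _ => by simp) hA
  rw [max_zero_sub_eq_indicator, integral_indicator hA,
    integral_sub hYint (integrableOn_const (measure_ne_top P _)), setIntegral_const,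
    smul_eq_mul, measureReal_def, mul_comm]

lemma integral_max_zero_sub_pos {Y : Ω → ℝ} (hint : Integrable (fun ω => max 0 (Y ω - s)) P)
    (hs : 0 < P {ω | s < Y ω}) : 0 < ∫ ω, max 0 (Y ω - s) ∂P := by
  rw [integral_pos_iff_support_of_nonneg (f := fun ω => max 0 (Y ω - s))
    (fun ω => le_max_left _ _) hint]
  convert hs using 2
  ext ω
  simp [Function.mem_support]

lemma mul_meas_le_le_lintegral_max_zero_sub {X : Ω → ℝ} (hX : Measurable X) (c : ℝ) :
    ENNReal.ofReal (c - s) * P {ω | c ≤ X ω}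
      ≤ ∫⁻ ω, ENNReal.ofReal (max 0 (X ω - s)) ∂P :=
  calc ENNReal.ofReal (c - s) * P {ω | c ≤ X ω}
      ≤ ENNReal.ofReal (c - s) *
          P {ω | ENNReal.ofReal (c - s) ≤ ENNReal.ofReal (max 0 (X ω - s))} := by
        refine mul_le_mul_right (measure_mono fun ω (hω : c ≤ X ω) => ?_) _
        exact ENNReal.ofReal_le_ofReal ((sub_le_sub_right hω s).trans (le_max_right _ _))
    _ ≤ ∫⁻ ω, ENNReal.ofReal (max 0 (X ω - s)) ∂P :=
        mul_meas_ge_le_lintegral₀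
          (measurable_const.max (hX.sub measurable_const)).ennreal_ofReal.aemeasurable _

end

/-- Proposition 2, part II: if `E φ(X) ≤ E φ(Y)` for all `φ(x) = max{0, a(x-t)+1}` with
`a > 0`, and `P{Y > s} > 0`, then `P{X ≥ E(Y | Y > s)} ≤ P{Y > s}`, where
`E(Y | Y > s) = E[Y 1_{Y>s}] / P{Y > s}`. -/
theorem stmt3 {Ω : Type*} [MeasurableSpace Ω] (P : Measure Ω) [IsProbabilityMeasure P]
    (X Y : Ω → ℝ) (hX : Measurable X) (hY : Measurable Y)
    (hint : Integrable (fun ω => max 0 (Y ω)) P)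
    (hmaj : ∀ a t : ℝ, 0 < a →
      (∫⁻ ω, ENNReal.ofReal (max 0 (a * (X ω - t) + 1)) ∂P)
        ≤ ∫⁻ ω, ENNReal.ofReal (max 0 (a * (Y ω - t) + 1)) ∂P)
    (s : ℝ) (hs : 0 < P {ω | s < Y ω}) :
    P {ω | (∫ ω in {ω | s < Y ω}, Y ω ∂P) / (P {ω | s < Y ω}).toReal ≤ X ω}
      ≤ P {ω | s < Y ω} := by
  set q := P {ω | s < Y ω}
  set m := (∫ ω in {ω | s < Y ω}, Y ω ∂P) / q.toReal
  have hq : 0 < q.toReal := ENNReal.toReal_pos hs.ne' (measure_ne_top P _)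
  have hg := integrable_max_zero_sub (s := s) hY hint
  have hmean : ∫ ω, max 0 (Y ω - s) ∂P = (m - s) * q.toReal := by
    rw [integral_max_zero_sub hY hg, sub_mul, div_mul_cancel₀ _ hq.ne']
  have hms : 0 < m - s := pos_of_mul_pos_left (hmean ▸ integral_max_zero_sub_pos hg hs) hq.le
  have hstop : ∫⁻ ω, ENNReal.ofReal (max 0 (X ω - s)) ∂P
      ≤ ∫⁻ ω, ENNReal.ofReal (max 0 (Y ω - s)) ∂P := by
    convert hmaj 1 (s + 1) one_pos using 5 <;> ring
  have hY_lintegral :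
      ∫⁻ ω, ENNReal.ofReal (max 0 (Y ω - s)) ∂P = ENNReal.ofReal (m - s) * q := by
    rw [← ofReal_integral_eq_lintegral_ofReal hg (ae_of_all _ fun ω => le_max_left _ _), hmean,
      ENNReal.ofReal_mul hms.le, ENNReal.ofReal_toReal (measure_ne_top P _)]
  refine (ENNReal.mul_le_mul_iff_right (ENNReal.ofReal_pos.2 hms).ne' ENNReal.ofReal_ne_top).1 ?_
  exact (mul_meas_le_le_lintegral_max_zero_sub hX m).trans (hstop.trans hY_lintegral.le)
end

section
/- Let Y be a real-valued random variable with E|Y| < ∞ and let s ∈ ℝ satisfy P{Y ≥ s} > 0. Define X = Y·1_{Y < s} + E(Y | Y ≥ s)·1_{Y ≥ s}. Then E[φ(X)] ≤ E[φ(Y)] for every convex φ : ℝ → ℝ, and P{X ≥ E(Y | Y ≥ s)} = P{Y ≥ s}. -/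
/-! Replacing `Y` on the event `{Y ≥ s}` by its mean `m` over that event can only decrease
`E φ` for convex `φ`, by Jensen's inequality on the event. Since `m ≥ s` while `X = Y < s` off the
event, `{X ≥ m}` is exactly `{Y ≥ s}`. -/

open MeasureTheory Set

namespace ConvexOn

variable {Ω : Type*} [MeasurableSpace Ω] {μ : Measure Ω} [IsFiniteMeasure μ] {A : Set Ω}
  {f : Ω → ℝ} {φ : ℝ → ℝ}

theorem measureReal_mul_map_setAverage_le (hφ : ConvexOn ℝ univ φ) (hA : μ A ≠ 0)
    (hf : IntegrableOn f A μ) (hφf : IntegrableOn (φ ∘ f) A μ) :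
    μ.real A * φ (⨍ ω in A, f ω ∂μ) ≤ ∫ ω in A, φ (f ω) ∂μ := by
  have jensen := hφ.map_set_average_le (hφ.continuousOn isOpen_univ) isClosed_univ hA
    (measure_ne_top μ A) (ae_of_all _ fun _ => mem_univ _) hf hφf
  calc μ.real A * φ (⨍ ω in A, f ω ∂μ) ≤ μ.real A * ⨍ ω in A, φ (f ω) ∂μ := by gcongr
    _ = ∫ ω in A, φ (f ω) ∂μ := measure_smul_setAverage _ (measure_ne_top μ A)

theorem integral_comp_piecewise_setAverage_le [DecidablePred (· ∈ A)] (hφ : ConvexOn ℝ univ φ)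
    (hA : MeasurableSet A) (hA0 : μ A ≠ 0) (hf : Integrable f μ)
    (hφf : Integrable (fun ω => φ (f ω)) μ) :
    Integrable (fun ω => φ (A.piecewise (fun _ => ⨍ ω in A, f ω ∂μ) f ω)) μ ∧
      ∫ ω, φ (A.piecewise (fun _ => ⨍ ω in A, f ω ∂μ) f ω) ∂μ ≤ ∫ ω, φ (f ω) ∂μ := by
  rw [← piecewise_op (s := A) (h := fun _ => φ)]
  have hconst_int : IntegrableOn (fun _ => φ (⨍ ω in A, f ω ∂μ)) A μ := integrableOn_const
  refine ⟨Integrable.piecewise hA hconst_int hφf.integrableOn, ?_⟩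
  rw [integral_piecewise hA hconst_int hφf.integrableOn, ← integral_add_compl hA hφf]
  refine add_le_add ?_ le_rfl
  simpa [setIntegral_const, mul_comm] using
    hφ.measureReal_mul_map_setAverage_le hA0 hf.integrableOn hφf.integrableOn

end ConvexOn

/-- Proposition 3 (sharpness): with `m = E(Y | Y ≥ s)` and
`X = Y 1_{Y < s} + m 1_{Y ≥ s}`, one has `E φ(X) ≤ E φ(Y)` for every convex `φ`
(with `φ(Y)` integrable, in which case `φ(X)` is integrable too), and
`P{X ≥ m} = P{Y ≥ s}`. -/
theorem stmt4 {Ω : Type*} [MeasurableSpace Ω] (P : Measure Ω) [IsProbabilityMeasure P]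
    (Y : Ω → ℝ) (hY : Measurable Y) (hint : Integrable Y P)
    (s : ℝ) (hs : 0 < P {ω | s ≤ Y ω})
    (m : ℝ) (hm : m = (∫ ω in {ω | s ≤ Y ω}, Y ω ∂P) / (P {ω | s ≤ Y ω}).toReal)
    (X : Ω → ℝ) (hXdef : X = fun ω => if Y ω < s then Y ω else m) :
    (∀ φ : ℝ → ℝ, ConvexOn ℝ Set.univ φ → Integrable (fun ω => φ (Y ω)) P →
        Integrable (fun ω => φ (X ω)) P ∧
          (∫ ω, φ (X ω) ∂P) ≤ ∫ ω, φ (Y ω) ∂P) ∧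
    P {ω | m ≤ X ω} = P {ω | s ≤ Y ω} := by
  classical
  set A := {ω | s ≤ Y ω}
  have hA : MeasurableSet A := measurableSet_le measurable_const hY
  have hm_avg : m = ⨍ ω in A, Y ω ∂P := by
    rw [hm, setAverage_eq, smul_eq_mul, div_eq_inv_mul, Measure.real]
  have hX : X = A.piecewise (fun _ => m) Y := by
    ext ω
    by_cases h : Y ω < s <;> simp [hXdef, A, Set.piecewise, h]
  have hs_le_m : s ≤ m := hm_avg ▸ (convex_Ici s).set_average_mem isClosed_Ici hs.ne'
    (measure_ne_top P A) (ae_restrict_of_forall_mem hA fun _ h => h) hint.integrableOn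
  refine ⟨fun φ hφ hφY => ?_, ?_⟩
  · rw [hX, hm_avg]
    exact hφ.integral_comp_piecewise_setAverage_le hA hs.ne' hint hφY
  · congr 1
    ext ω
    by_cases h : s ≤ Y ω
    · simp [hX, A, h]
    · simp [hX, A, h, (not_le.1 h).trans_le hs_le_m]
end

section
/- Let X and Y be real-valued random variables with E[max{0,Y}] < ∞ such that E[φ(X)] ≤ E[φ(Y)] for all φ(x) = max{0, a(x−t)+1}, a > 0, t ∈ ℝ. Then for all x ∈ (0,1), the quantile function of X satisfies H_X(x) ≤ (1/(1−x)) ∫_x^1 H_Y(u) du. -/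
/-!
Write `s = H_Y(x)` and `q = H_X(x)`. Taking `a = 1` in the hypothesis gives the stop-loss
comparison `E(X - s)⁺ ≤ E(Y - s)⁺`. Representing both variables as `H(U)` with `U` uniform
on `(0,1)`, monotonicity of the quantile functions gives
`(1 - x)(q - s) ≤ ∫_x^1 (H_X(u) - s)⁺ du ≤ E(X - s)⁺` and, since `H_Y ≤ s` on `(0, x]` and
`H_Y ≥ s` on `(x, 1)`, `E(Y - s)⁺ = ∫_x^1 (H_Y(u) - s) du`. Combining,
`(1 - x) q ≤ ∫_x^1 H_Y(u) du`.
-/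

open MeasureTheory Set Filter Topology ProbabilityTheory
open scoped ENNReal

/-- The quantile function `H_Z(x) = inf {t : P{Z ≤ t} ≥ x}`. -/
noncomputable def quantile {Ω : Type*} [MeasurableSpace Ω]
    (μ : MeasureTheory.Measure Ω) (Z : Ω → ℝ) (x : ℝ) : ℝ :=
  sInf {t : ℝ | x ≤ (μ {ω | Z ω ≤ t}).toReal}

lemma sInf_le_iff_le_cdf (μ : Measure ℝ) {x t : ℝ} (hx : x ∈ Ioo 0 1) :
    sInf {s | x ≤ cdf μ s} ≤ t ↔ x ≤ cdf μ t := by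
  have hne : {s | x ≤ cdf μ s}.Nonempty :=
    ((tendsto_cdf_atTop μ).eventually (eventually_ge_nhds hx.2)).exists
  have hbdd : BddBelow {s | x ≤ cdf μ s} := by
    obtain ⟨t₀, ht₀⟩ := eventually_atBot.1 <|
      (tendsto_cdf_atBot μ).eventually (eventually_lt_nhds hx.1)
    exact ⟨t₀, fun s hs => le_of_not_gt fun hlt => (ht₀ s hlt.le).not_ge hs⟩
  refine ⟨fun h => ?_, fun h => csInf_le hbdd h⟩
  -- `x ≤ cdf μ s` for every `s > sInf`, and the cdf is right continuous
  have hq : x ≤ cdf μ (sInf {s | x ≤ cdf μ s}) := by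
    refine ge_of_tendsto (((cdf μ).right_continuous _).mono_left
      (nhdsWithin_mono _ Ioi_subset_Ici_self)) ?_
    filter_upwards [self_mem_nhdsWithin] with s hs
    obtain ⟨r, hr, hrs⟩ := exists_lt_of_csInf_lt hne hs
    exact hr.trans (monotone_cdf μ hrs.le)
  exact hq.trans (monotone_cdf μ h)

section Quantile

variable {Ω : Type*} [MeasurableSpace Ω] {P : Measure Ω} [IsProbabilityMeasure P]
  {Z : Ω → ℝ}

lemma quantile_eq_sInf_cdf (hZ : Measurable Z) (x : ℝ) :
    quantile P Z x = sInf {t | x ≤ cdf (P.map Z) t} := by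
  have : IsProbabilityMeasure (P.map Z) := Measure.isProbabilityMeasure_map hZ.aemeasurable
  simp only [quantile, cdf_eq_real, measureReal_def, Measure.map_apply hZ measurableSet_Iic]
  rfl

lemma quantile_le_iff (hZ : Measurable Z) {x t : ℝ} (hx : x ∈ Ioo 0 1) :
    quantile P Z x ≤ t ↔ x ≤ cdf (P.map Z) t := by
  rw [quantile_eq_sInf_cdf hZ, sInf_le_iff_le_cdf _ hx]

lemma quantile_monotoneOn (hZ : Measurable Z) : MonotoneOn (quantile P Z) (Ioo 0 1) :=
  fun _ ha _ hb hab =>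
    (quantile_le_iff hZ ha).2 (hab.trans ((quantile_le_iff hZ hb).1 le_rfl))

lemma map_quantile_volume_Ioo (hZ : Measurable Z) :
    (volume.restrict (Ioo 0 1)).map (quantile P Z) = P.map Z := by
  have hmeas : AEMeasurable (quantile P Z) (volume.restrict (Ioo 0 1)) :=
    aemeasurable_restrict_of_monotoneOn measurableSet_Ioo (quantile_monotoneOn hZ)
  have : IsProbabilityMeasure (P.map Z) := Measure.isProbabilityMeasure_map hZ.aemeasurable
  have : IsFiniteMeasure ((volume.restrict (Ioo (0 : ℝ) 1)).map (quantile P Z)) :=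
    ⟨by simp [Measure.map_apply_of_aemeasurable hmeas MeasurableSet.univ]⟩
  refine Measure.ext_of_Iic _ _ fun t => ?_
  set c := cdf (P.map Z) t
  have hpre : quantile P Z ⁻¹' Iic t ∩ Ioo 0 1 = Iic c ∩ Ioo 0 1 := by
    ext u
    simp only [mem_inter_iff, mem_preimage, mem_Iic, and_congr_left_iff]
    exact quantile_le_iff hZ
  rw [Measure.map_apply_of_aemeasurable hmeas measurableSet_Iic,
    Measure.restrict_apply' measurableSet_Ioo, hpre, ← ofReal_cdf]
  refine le_antisymm ?_ ?_
  · calc volume (Iic c ∩ Ioo 0 1) ≤ volume (Icc 0 c) :=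
          measure_mono fun u hu => ⟨hu.2.1.le, hu.1⟩
      _ = ENNReal.ofReal c := by rw [Real.volume_Icc, sub_zero]
  · calc ENNReal.ofReal c = volume (Ioo 0 c) := by rw [Real.volume_Ioo, sub_zero]
      _ ≤ volume (Iic c ∩ Ioo 0 1) :=
          measure_mono fun u hu => ⟨hu.2.le, hu.1, hu.2.trans_le (cdf_le_one _ t)⟩

lemma setLIntegral_Ioo_comp_quantile (hZ : Measurable Z) {g : ℝ → ℝ≥0∞}
    (hg : Measurable g) : ∫⁻ u in Ioo 0 1, g (quantile P Z u) = ∫⁻ ω, g (Z ω) ∂P := by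
  rw [← lintegral_map' hg.aemeasurable
      (aemeasurable_restrict_of_monotoneOn measurableSet_Ioo (quantile_monotoneOn hZ)),
    map_quantile_volume_Ioo hZ, lintegral_map hg hZ]

lemma ofReal_quantile_sub_mul_le_lintegral (hZ : Measurable Z) {x : ℝ} (hx : x ∈ Ioo 0 1)
    (s : ℝ) :
    ENNReal.ofReal ((1 - x) * (quantile P Z x - s)) ≤ ∫⁻ ω, ENNReal.ofReal (Z ω - s) ∂P := by
  rw [ENNReal.ofReal_mul (by linarith [hx.2]), ← Real.volume_Ioo, mul_comm, ← setLIntegral_const,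
    ← setLIntegral_Ioo_comp_quantile hZ (g := fun z => ENNReal.ofReal (z - s)) (by fun_prop)]
  calc ∫⁻ _ in Ioo x 1, ENNReal.ofReal (quantile P Z x - s)
      ≤ ∫⁻ u in Ioo x 1, ENNReal.ofReal (quantile P Z u - s) := by
        refine setLIntegral_mono' measurableSet_Ioo fun u hu => ?_
        gcongr
        exact quantile_monotoneOn hZ hx ⟨hx.1.trans hu.1, hu.2⟩ hu.1.le
    _ ≤ ∫⁻ u in Ioo 0 1, ENNReal.ofReal (quantile P Z u - s) :=
        lintegral_mono_set (Ioo_subset_Ioo_left hx.1.le)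

lemma lintegral_sub_quantile_eq (hZ : Measurable Z) {x : ℝ} (hx : x ∈ Ioo 0 1) :
    ∫⁻ ω, ENNReal.ofReal (Z ω - quantile P Z x) ∂P
      = ∫⁻ u in Ioo x 1, ENNReal.ofReal (quantile P Z u - quantile P Z x) := by
  rw [← setLIntegral_Ioo_comp_quantile hZ (g := fun z => ENNReal.ofReal (z - quantile P Z x))
      (by fun_prop), ← Ioc_union_Ioo_eq_Ioo hx.1.le hx.2,
    lintegral_union measurableSet_Ioo (Ioc_disjoint_Ioi le_rfl |>.mono_right
      Ioo_subset_Ioi_self),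
    setLIntegral_eq_zero measurableSet_Ioc fun u hu => ?_, zero_add]
  rw [Pi.zero_apply, ENNReal.ofReal_eq_zero, sub_nonpos]
  exact quantile_monotoneOn hZ ⟨hu.1, hu.2.trans_lt hx.2⟩ hx hu.2

end Quantile

lemma lintegral_ofReal_sub_ne_top {Ω : Type*} [MeasurableSpace Ω] {P : Measure Ω}
    [IsFiniteMeasure P] {Y : Ω → ℝ} (hint : Integrable (fun ω => max 0 (Y ω)) P) (s : ℝ) :
    ∫⁻ ω, ENNReal.ofReal (Y ω - s) ∂P ≠ ∞ := by
  refine ne_top_of_le_ne_top (hint.add (integrable_const (-s))).lintegral_lt_top.ne ?_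
  refine lintegral_mono fun ω => ENNReal.ofReal_le_ofReal ?_
  simp only [Pi.add_apply]
  linarith [le_max_right 0 (Y ω)]

lemma intervalIntegral_eq_toReal_lintegral_sub_add {f : ℝ → ℝ} {a b c : ℝ} (hab : a ≤ b)
    (hf : AEMeasurable f (volume.restrict (Ioo a b))) (hfc : ∀ u ∈ Ioo a b, c ≤ f u)
    (hfin : ∫⁻ u in Ioo a b, ENNReal.ofReal (f u - c) ≠ ∞) :
    ∫ u in a..b, f u = (∫⁻ u in Ioo a b, ENNReal.ofReal (f u - c)).toReal + (b - a) * c := by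
  have hnonneg : 0 ≤ᵐ[volume.restrict (Ioo a b)] fun u => f u - c := by
    filter_upwards [ae_restrict_mem measurableSet_Ioo] with u hu
    exact sub_nonneg.2 (hfc u hu)
  have hsub : IntegrableOn (fun u => f u - c) (Ioo a b) :=
    ⟨(hf.sub aemeasurable_const).aestronglyMeasurable,
      (hasFiniteIntegral_iff_ofReal hnonneg).2 hfin.lt_top⟩
  have hconst : IntegrableOn (fun _ => c) (Ioo a b) := integrableOn_const (by simp)
  have hsplit := integral_add hsub hconst
  simp only [sub_add_cancel, setIntegral_const, Real.volume_real_Ioo_of_le hab, smul_eq_mul]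
    at hsplit
  rw [intervalIntegral.integral_of_le hab, integral_Ioc_eq_integral_Ioo, hsplit,
    integral_eq_lintegral_of_nonneg_ae hnonneg hsub.aestronglyMeasurable]

/-- Proposition 4: under majorization by the class `E*`, for all `x ∈ (0,1)`,
`H_X(x) ≤ (1-x)⁻¹ ∫_x^1 H_Y(u) du`. -/
theorem stmt5 {Ω : Type*} [MeasurableSpace Ω] (P : Measure Ω) [IsProbabilityMeasure P]
    (X Y : Ω → ℝ) (hX : Measurable X) (hY : Measurable Y)
    (hint : Integrable (fun ω => max 0 (Y ω)) P)
    (hmaj : ∀ a t : ℝ, 0 < a →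
      (∫⁻ ω, ENNReal.ofReal (max 0 (a * (X ω - t) + 1)) ∂P)
        ≤ ∫⁻ ω, ENNReal.ofReal (max 0 (a * (Y ω - t) + 1)) ∂P) :
    ∀ x ∈ Set.Ioo (0 : ℝ) 1,
      quantile P X x ≤ (1 - x)⁻¹ * ∫ u in x..1, quantile P Y u := by
  intro x hx
  set s := quantile P Y x
  have stopLoss : ∫⁻ ω, ENNReal.ofReal (X ω - s) ∂P ≤ ∫⁻ ω, ENNReal.ofReal (Y ω - s) ∂P := by
    simpa [sub_add_eq_sub_sub] using hmaj 1 (s + 1) one_pos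
  have hfin := lintegral_ofReal_sub_ne_top hint s
  have hlow := (ofReal_quantile_sub_mul_le_lintegral hX hx s).trans stopLoss
  rw [lintegral_sub_quantile_eq hY hx] at hfin hlow
  rw [ENNReal.ofReal_le_iff_le_toReal hfin] at hlow
  rw [intervalIntegral_eq_toReal_lintegral_sub_add (c := s) hx.2.le
      (aemeasurable_restrict_of_monotoneOn measurableSet_Ioo
        ((quantile_monotoneOn hY).mono (Ioo_subset_Ioo_left hx.1.le)))
      (fun u hu => quantile_monotoneOn hY hx ⟨hx.1.trans hu.1, hu.2⟩ hu.1.le) hfin,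
    inv_mul_eq_div, le_div_iff₀ (by linarith [hx.2])]
  linarith
end

section
/- Let H_X and H : (0,1) → ℝ with H > 0 be such that H_X(x) ≤ (1/(1−x)) ∫_x^1 H(u) du for all x ∈ (0,1), suppose ω : (0,1) → (1,∞) is non-increasing with ∫_0^1 ω(u) du < ∞, and suppose H(1 − δ(1−x)) ≤ ω(δ)H(x) for all x, δ ∈ (0,1). Then H_X(x) ≤ H(x)·∫_0^1 ω(u) du for all x ∈ (0,1). -/
/-!
For `u ∈ (x, 1)`, the regularity hypothesis at `δ = (1 - u) / (1 - x)` reads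
`H u ≤ ω ((1 - u) / (1 - x)) * H x`. Integrating over `(x, 1)`, the affine substitution
`u ↦ (1 - u) / (1 - x)` of `(x, 1)` onto `(0, 1)` turns the right side into
`H x * (1 - x) * ∫₀¹ ω`, and the factor `1 - x` cancels against the averaging weight.
-/

open MeasureTheory Set

/-- `f` need not be integrable: otherwise its integral is the junk value `0 ≤ ∫ g`. -/
theorem intervalIntegral.integral_mono_on_Ioo_of_nonneg {f g : ℝ → ℝ} {a b : ℝ} (hab : a ≤ b)
    (hf : ∀ u ∈ Ioo a b, 0 ≤ f u) (hg : IntervalIntegrable g volume a b)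
    (hfg : ∀ u ∈ Ioo a b, f u ≤ g u) : ∫ u in a..b, f u ≤ ∫ u in a..b, g u := by
  rw [intervalIntegral.integral_of_le hab, intervalIntegral.integral_of_le hab,
    integral_Ioc_eq_integral_Ioo, integral_Ioc_eq_integral_Ioo]
  rw [intervalIntegrable_iff_integrableOn_Ioo_of_le hab] at hg
  exact integral_mono_of_nonneg (ae_restrict_of_forall_mem measurableSet_Ioo hf) hg
    (ae_restrict_of_forall_mem measurableSet_Ioo hfg)

theorem intervalIntegral.integral_comp_one_sub_div {E : Type*} [NormedAddCommGroup E]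
    [NormedSpace ℝ E] (f : ℝ → E) {x : ℝ} (hx : x ≠ 1) :
    ∫ u in x..1, f ((1 - u) / (1 - x)) = (1 - x) • ∫ v in (0 : ℝ)..1, f v := by
  have hx' : 1 - x ≠ 0 := sub_ne_zero.mpr hx.symm
  rw [intervalIntegral.integral_comp_sub_left (fun v => f (v / (1 - x))) 1,
    intervalIntegral.integral_comp_div f hx', sub_self, zero_div, div_self hx']

theorem IntervalIntegrable.comp_one_sub_div {E : Type*} [NormedAddCommGroup E] {f : ℝ → E}
    {x : ℝ} (hf : IntervalIntegrable f volume 0 1) (hx : x ≠ 1) :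
    IntervalIntegrable (fun u => f ((1 - u) / (1 - x))) volume x 1 := by
  have hx' : 1 - x ≠ 0 := sub_ne_zero.mpr hx.symm
  simpa [div_eq_mul_inv, hx'] using ((hf.comp_mul_right (c := (1 - x)⁻¹)).comp_sub_left 1).symm

theorem one_sub_div_one_sub_mem_Ioo {x u : ℝ} (hu : u ∈ Ioo x 1) :
    (1 - u) / (1 - x) ∈ Ioo 0 1 :=
  ⟨div_pos (by linarith [hu.2]) (by linarith [hu.1, hu.2]),
    (div_lt_one (by linarith [hu.1, hu.2])).mpr (by linarith [hu.1])⟩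

theorem stmt6_general (HX H ω : ℝ → ℝ)
    (hHpos : ∀ x ∈ Set.Ioo (0 : ℝ) 1, 0 < H x)
    (hHX : ∀ x ∈ Set.Ioo (0 : ℝ) 1, HX x ≤ (1 - x)⁻¹ * ∫ u in x..1, H u)
    (hωint : IntegrableOn ω (Set.Ioo 0 1))
    (hreg : ∀ x ∈ Set.Ioo (0 : ℝ) 1, ∀ δ ∈ Set.Ioo (0 : ℝ) 1,
      H (1 - δ * (1 - x)) ≤ ω δ * H x) :
    ∀ x ∈ Set.Ioo (0 : ℝ) 1, HX x ≤ H x * ∫ u in Set.Ioo (0 : ℝ) 1, ω u := by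
  intro x hx
  have hx1 : 1 - x ≠ 0 := sub_ne_zero.mpr hx.2.ne'
  have hbound : ∀ u ∈ Ioo x 1, H u ≤ H x * ω ((1 - u) / (1 - x)) := fun u hu => by
    simpa [div_mul_cancel₀ _ hx1, mul_comm] using hreg x hx _ (one_sub_div_one_sub_mem_Ioo hu)
  have hωII : IntervalIntegrable ω volume 0 1 :=
    (intervalIntegrable_iff_integrableOn_Ioo_of_le zero_le_one).mpr hωint
  calc HX x ≤ (1 - x)⁻¹ * ∫ u in x..1, H u := hHX x hx
    _ ≤ (1 - x)⁻¹ * ∫ u in x..1, H x * ω ((1 - u) / (1 - x)) := by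
      gcongr
      · exact inv_nonneg.mpr (sub_nonneg.mpr hx.2.le)
      · exact intervalIntegral.integral_mono_on_Ioo_of_nonneg hx.2.le
          (fun u hu => (hHpos u ⟨hx.1.trans hu.1, hu.2⟩).le)
          ((hωII.comp_one_sub_div hx.2.ne).const_mul _) hbound
    _ = H x * ∫ u in Ioo (0 : ℝ) 1, ω u := by
      rw [intervalIntegral.integral_const_mul, intervalIntegral.integral_comp_one_sub_div ω hx.2.ne,
        smul_eq_mul, intervalIntegral.integral_of_le zero_le_one, integral_Ioc_eq_integral_Ioo]
      field_simp

/-- Proposition 5: if `H_X(x) ≤ (1-x)⁻¹ ∫_x^1 H(u) du` with `H > 0`, and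
`ω : (0,1) → (1,∞)` is non-increasing with `∫_0^1 ω < ∞` and
`H(1 - δ(1-x)) ≤ ω(δ) H(x)`, then `H_X(x) ≤ H(x) ∫_0^1 ω(u) du`. -/
theorem stmt6 (HX H ω : ℝ → ℝ)
    (hHpos : ∀ x ∈ Set.Ioo (0 : ℝ) 1, 0 < H x)
    (hHX : ∀ x ∈ Set.Ioo (0 : ℝ) 1, HX x ≤ (1 - x)⁻¹ * ∫ u in x..1, H u)
    (hω1 : ∀ u ∈ Set.Ioo (0 : ℝ) 1, 1 < ω u)
    (hωanti : AntitoneOn ω (Set.Ioo 0 1))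
    (hωint : IntegrableOn ω (Set.Ioo 0 1))
    (hreg : ∀ x ∈ Set.Ioo (0 : ℝ) 1, ∀ δ ∈ Set.Ioo (0 : ℝ) 1,
      H (1 - δ * (1 - x)) ≤ ω δ * H x) :
    ∀ x ∈ Set.Ioo (0 : ℝ) 1, HX x ≤ H x * ∫ u in Set.Ioo (0 : ℝ) 1, ω u :=
  stmt6_general HX H ω hHpos hHX hωint hreg
end

section
/- Let X and Y be real-valued random variables with E[max{0,Y}] < ∞ such that E[φ(X)] ≤ E[φ(Y)] for all φ(x) = max{0,a(x−t)+1}, a>0, t∈ℝ. Suppose T, γ ≥ 1, p > 1, and Q : (0,∞) → (0,∞) satisfies Q(t)·exp(−t²/(2p)) ≤ T·Q(s)·exp(−s²/(2p)) for all 0 < s < t. If P{Y > Q(t)} < γ·exp(−t²/2) for all t > 0, then P{X > (pT/(p−1))·Q(t)} ≤ γ·exp(−t²/2) for all t > 0. -/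
/-!
With `c = T Q(t)` and `b = c / (p - 1)`, the hinge `φ(x) = max 0 ((x - c) / b)` belongs to `E*` and
is at least `1` above `c + b = pT Q(t) / (p - 1)`, so `P{X > c + b} ≤ E φ(X) ≤ E φ(Y)`, and by the
layer-cake formula `E φ(Y) = ∫₀^∞ P{Y > c + b s} ds`. For `u > c`, the regularity of `Q` applied at
`τ = √(t² + 2p log (u / c)) > t` gives `Q(τ) ≤ u`, hence `P{Y > u} ≤ γ e^{-t²/2} (u / c)^{-p}`.
Since `(c + b s) / c = 1 + s / (p - 1)`, the resulting integral is `γ e^{-t²/2} ∫₀^∞ (1 + s/(p-1))^{-p} ds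
= γ e^{-t²/2}`.
-/

open MeasureTheory Set Real

theorem le_mul_exp_of_regular {Q : ℝ → ℝ} {T p : ℝ}
    (hQ : ∀ s t : ℝ, 0 < s → s < t →
      Q t * Real.exp (-t ^ 2 / (2 * p)) ≤ T * Q s * Real.exp (-s ^ 2 / (2 * p)))
    {s t : ℝ} (hs : 0 < s) (hst : s < t) :
    Q t ≤ T * Q s * Real.exp ((t ^ 2 - s ^ 2) / (2 * p)) := by
  calc Q t = Q t * Real.exp (-t ^ 2 / (2 * p)) * Real.exp (t ^ 2 / (2 * p)) := by
        rw [mul_assoc, ← Real.exp_add, neg_div, neg_add_cancel, Real.exp_zero, mul_one]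
    _ ≤ T * Q s * Real.exp (-s ^ 2 / (2 * p)) * Real.exp (t ^ 2 / (2 * p)) :=
        mul_le_mul_of_nonneg_right (hQ s t hs hst) (Real.exp_pos _).le
    _ = T * Q s * Real.exp ((t ^ 2 - s ^ 2) / (2 * p)) := by
        rw [mul_assoc, ← Real.exp_add]; ring_nf

section Tails

variable {Ω : Type*} [MeasurableSpace Ω] {P : Measure Ω}

theorem measure_lt_le_lintegral_hinge {X : Ω → ℝ} (hX : AEMeasurable X P) {a : ℝ} (ha : 0 ≤ a)
    (t : ℝ) : P {ω | t < X ω} ≤ ∫⁻ ω, ENNReal.ofReal (max 0 (a * (X ω - t) + 1)) ∂P := by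
  have hφ : AEMeasurable (fun ω => ENNReal.ofReal (max 0 (a * (X ω - t) + 1))) P := by fun_prop
  calc P {ω | t < X ω}
      ≤ P {ω | 1 ≤ ENNReal.ofReal (max 0 (a * (X ω - t) + 1))} := by
        refine measure_mono fun ω (hω : t < X ω) => ?_
        rw [mem_ofPred_eq, ENNReal.one_le_ofReal]
        exact le_max_of_le_right (by nlinarith)
    _ ≤ ∫⁻ ω, ENNReal.ofReal (max 0 (a * (X ω - t) + 1)) ∂P := by
        simpa using mul_meas_ge_le_lintegral₀ hφ 1

theorem lintegral_hinge_eq_lintegral_measure_lt {Y : Ω → ℝ} (hY : AEMeasurable Y P) {a : ℝ}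
    (ha : 0 < a) (t : ℝ) :
    ∫⁻ ω, ENNReal.ofReal (max 0 (a * (Y ω - t) + 1)) ∂P
      = ∫⁻ s in Ioi 0, P {ω | t + (s - 1) / a < Y ω} := by
  rw [lintegral_eq_lintegral_meas_lt P (f := fun ω => max 0 (a * (Y ω - t) + 1))
    (ae_of_all _ fun ω => le_max_left _ _) (by fun_prop)]
  refine setLIntegral_congr_fun measurableSet_Ioi fun s (hs : 0 < s) => congrArg P ?_
  ext ω
  simp only [mem_ofPred_eq, lt_max_iff, hs.not_gt, false_or]
  rw [← lt_sub_iff_add_lt', div_lt_iff₀ ha]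
  constructor <;> intro h <;> linarith

theorem measure_lt_le_of_regular {Y : Ω → ℝ} {Q : ℝ → ℝ} {T γ p : ℝ} (hp : 0 < p)
    (hQ : ∀ s t : ℝ, 0 < s → s < t →
      Q t * Real.exp (-t ^ 2 / (2 * p)) ≤ T * Q s * Real.exp (-s ^ 2 / (2 * p)))
    (hYtail : ∀ t > 0, P {ω | Q t < Y ω} ≤ ENNReal.ofReal (γ * Real.exp (-t ^ 2 / 2)))
    {t u : ℝ} (ht : 0 < t) (hc : 0 < T * Q t) (hu : T * Q t < u) :
    P {ω | u < Y ω} ≤ ENNReal.ofReal (γ * Real.exp (-t ^ 2 / 2) * (u / (T * Q t)) ^ (-p)) := by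
  set c := T * Q t
  have hu_div : 1 < u / c := (one_lt_div hc).2 hu
  have hlog : 0 < Real.log (u / c) := Real.log_pos hu_div
  set τ := Real.sqrt (t ^ 2 + 2 * p * Real.log (u / c))
  have hτsq : τ ^ 2 = t ^ 2 + 2 * p * Real.log (u / c) := Real.sq_sqrt (by positivity)
  have htτ : t < τ := (Real.lt_sqrt ht.le).2 (by nlinarith)
  have hQτ : Q τ ≤ u := by
    calc Q τ ≤ c * Real.exp ((τ ^ 2 - t ^ 2) / (2 * p)) := le_mul_exp_of_regular hQ ht htτ
      _ = u := by
        rw [show (τ ^ 2 - t ^ 2) / (2 * p) = Real.log (u / c) by rw [hτsq]; field_simp; ring,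
          Real.exp_log (by positivity), mul_div_cancel₀ _ hc.ne']
  have hexp : Real.exp (-τ ^ 2 / 2) = Real.exp (-t ^ 2 / 2) * (u / c) ^ (-p) := by
    rw [Real.rpow_def_of_pos (by positivity), ← Real.exp_add, hτsq]; ring_nf
  calc P {ω | u < Y ω} ≤ P {ω | Q τ < Y ω} := measure_mono fun ω (h : u < Y ω) => hQτ.trans_lt h
    _ ≤ ENNReal.ofReal (γ * Real.exp (-τ ^ 2 / 2)) := hYtail τ (ht.trans htτ)
    _ = ENNReal.ofReal (γ * Real.exp (-t ^ 2 / 2) * (u / c) ^ (-p)) := by rw [hexp, mul_assoc]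

end Tails

theorem lintegral_Ioi_one_add_div_rpow_neg {k p : ℝ} (hk : 0 < k) (hp : 1 < p) :
    ∫⁻ s in Ioi (0 : ℝ), ENNReal.ofReal ((1 + s / k) ^ (-p)) = ENNReal.ofReal (k / (p - 1)) := by
  have hp1 : 0 < p - 1 := sub_pos.2 hp
  have hbase : ∀ s ∈ Ici (0 : ℝ), 0 < 1 + s / k := fun s (hs : 0 ≤ s) => by positivity
  have hnonneg : ∀ s ∈ Ioi (0 : ℝ), 0 ≤ (1 + s / k) ^ (-p) := fun s hs =>
    (Real.rpow_pos_of_pos (hbase s (mem_Ici_of_Ioi hs)) _).le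
  have hderiv : ∀ s ∈ Ici (0 : ℝ), HasDerivAt (fun s => -(k / (p - 1)) * (1 + s / k) ^ (1 - p))
      ((1 + s / k) ^ (-p)) s := by
    intro s hs
    have h := ((((hasDerivAt_id s).div_const k).const_add 1).rpow_const
      (p := 1 - p) (Or.inl (hbase s hs).ne')).const_mul (-(k / (p - 1)))
    refine h.congr_deriv ?_
    rw [id, show 1 - p - 1 = -p by ring]
    field_simp
    ring
  have hlim : Filter.Tendsto (fun s => -(k / (p - 1)) * (1 + s / k) ^ (1 - p))
      Filter.atTop (nhds 0) := by
    have hgrow : Filter.Tendsto (fun s : ℝ => 1 + s / k) Filter.atTop Filter.atTop :=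
      Filter.tendsto_atTop_add_const_left _ 1 (Filter.tendsto_id.atTop_div_const hk)
    have h := ((tendsto_rpow_neg_atTop hp1).comp hgrow).const_mul (-(k / (p - 1)))
    rw [mul_zero, neg_sub] at h
    exact h
  rw [← ofReal_integral_eq_lintegral_ofReal (integrableOn_Ioi_deriv_of_nonneg' hderiv hnonneg hlim)
      (ae_restrict_of_forall_mem measurableSet_Ioi hnonneg),
    integral_Ioi_of_hasDerivAt_of_nonneg' hderiv hnonneg hlim]
  simp

theorem stmt7_general {Ω : Type*} [MeasurableSpace Ω] (P : Measure Ω)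
    (X Y : Ω → ℝ) (hX : Measurable X) (hY : Measurable Y)
    (hmaj : ∀ a t : ℝ, 0 < a →
      (∫⁻ ω, ENNReal.ofReal (max 0 (a * (X ω - t) + 1)) ∂P)
        ≤ ∫⁻ ω, ENNReal.ofReal (max 0 (a * (Y ω - t) + 1)) ∂P)
    (T γ p : ℝ) (hT : 1 ≤ T) (hp : 1 < p)
    (Q : ℝ → ℝ) (hQpos : ∀ t > 0, 0 < Q t)
    (hQ : ∀ s t : ℝ, 0 < s → s < t →
      Q t * Real.exp (-t ^ 2 / (2 * p)) ≤ T * Q s * Real.exp (-s ^ 2 / (2 * p)))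
    (hYtail : ∀ t > 0, P {ω | Q t < Y ω} < ENNReal.ofReal (γ * Real.exp (-t ^ 2 / 2))) :
    ∀ t > 0, P {ω | p * T / (p - 1) * Q t < X ω}
      ≤ ENNReal.ofReal (γ * Real.exp (-t ^ 2 / 2)) := by
  intro t ht
  have hp1 : 0 < p - 1 := sub_pos.2 hp
  have hc : 0 < T * Q t := mul_pos (by linarith) (hQpos t ht)
  set c := T * Q t
  set b := c / (p - 1)
  have hb : 0 < b := div_pos hc hp1
  have hlevel : p * T / (p - 1) * Q t = c + b := by simp only [b, c]; field_simp; ring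
  have htail : ∀ s ∈ Ioi (0 : ℝ), P {ω | c + b + (s - 1) / b⁻¹ < Y ω}
      ≤ ENNReal.ofReal (γ * Real.exp (-t ^ 2 / 2)) * ENNReal.ofReal ((1 + s / (p - 1)) ^ (-p)) := by
    intro s (hs : 0 < s)
    have hu : c + b + (s - 1) / b⁻¹ = c + b * s := by field_simp; ring
    have hratio : (c + b * s) / c = 1 + s / (p - 1) := by simp only [b]; field_simp
    rw [hu, ← ENNReal.ofReal_mul' (Real.rpow_nonneg (by positivity) _), ← hratio]
    exact measure_lt_le_of_regular (by linarith) hQ (fun t ht => (hYtail t ht).le) ht hc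
      (by nlinarith)
  calc P {ω | p * T / (p - 1) * Q t < X ω}
      ≤ ∫⁻ ω, ENNReal.ofReal (max 0 (b⁻¹ * (X ω - (c + b)) + 1)) ∂P := by
        rw [hlevel]; exact measure_lt_le_lintegral_hinge hX.aemeasurable (inv_pos.2 hb).le _
    _ ≤ ∫⁻ ω, ENNReal.ofReal (max 0 (b⁻¹ * (Y ω - (c + b)) + 1)) ∂P := hmaj _ _ (inv_pos.2 hb)
    _ = ∫⁻ s in Ioi 0, P {ω | c + b + (s - 1) / b⁻¹ < Y ω} :=
        lintegral_hinge_eq_lintegral_measure_lt hY.aemeasurable (inv_pos.2 hb) _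
    _ ≤ ∫⁻ s in Ioi 0, ENNReal.ofReal (γ * Real.exp (-t ^ 2 / 2))
          * ENNReal.ofReal ((1 + s / (p - 1)) ^ (-p)) :=
        setLIntegral_mono (by fun_prop) htail
    _ = ENNReal.ofReal (γ * Real.exp (-t ^ 2 / 2)) := by
        rw [lintegral_const_mul _ (by fun_prop), lintegral_Ioi_one_add_div_rpow_neg hp1 hp,
          div_self hp1.ne', ENNReal.ofReal_one, mul_one]

/-- Proposition 6 (Gaussian v): under `E*`-majorization of `X` by `Y`, if
`Q(t) e^{-t²/(2p)} ≤ T Q(s) e^{-s²/(2p)}` for `0 < s < t` and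
`P{Y > Q(t)} < γ e^{-t²/2}` for all `t > 0`, then
`P{X > (pT/(p-1)) Q(t)} ≤ γ e^{-t²/2}` for all `t > 0`. -/
theorem stmt7 {Ω : Type*} [MeasurableSpace Ω] (P : Measure Ω) [IsProbabilityMeasure P]
    (X Y : Ω → ℝ) (hX : Measurable X) (hY : Measurable Y)
    (hint : Integrable (fun ω => max 0 (Y ω)) P)
    (hmaj : ∀ a t : ℝ, 0 < a →
      (∫⁻ ω, ENNReal.ofReal (max 0 (a * (X ω - t) + 1)) ∂P)
        ≤ ∫⁻ ω, ENNReal.ofReal (max 0 (a * (Y ω - t) + 1)) ∂P)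
    (T γ p : ℝ) (hT : 1 ≤ T) (hγ : 1 ≤ γ) (hp : 1 < p)
    (Q : ℝ → ℝ) (hQpos : ∀ t > 0, 0 < Q t)
    (hQ : ∀ s t : ℝ, 0 < s → s < t →
      Q t * Real.exp (-t ^ 2 / (2 * p)) ≤ T * Q s * Real.exp (-s ^ 2 / (2 * p)))
    (hYtail : ∀ t > 0, P {ω | Q t < Y ω} < ENNReal.ofReal (γ * Real.exp (-t ^ 2 / 2))) :
    ∀ t > 0, P {ω | p * T / (p - 1) * Q t < X ω}
      ≤ ENNReal.ofReal (γ * Real.exp (-t ^ 2 / 2)) :=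
  stmt7_general P X Y hX hY hmaj T γ p hT hp Q hQpos hQ hYtail
end

section
/- Let Y be a real-valued random variable with E|Y| < ∞ and convex quantile function H_Y, and suppose |H_Y^*(δx) − H_Y^*(δy)| ≤ T·δ^{−1/p}·|H_Y^*(x) − H_Y^*(y)| holds for some p > 1, T ≥ 1 and all δ, x, y ∈ (0,1), where H_Y^*(u) = H_Y(1−u). If R > 1 satisfies T ≤ (R−1)R^{−1/p}/2, then for all x ∈ (0,1), H_Y^*(x/R) ≥ (1/x)∫_0^x H_Y^*(u) du. -/
/-!
Write `f u = H_Y(1 - u)`, which is convex and antitone on `(0, 1)`, and `a = x / R`. The claim is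
`D ≤ A` for `D = ∫₀ᵃ (f - f a)` and `A = ∫ₐˣ (f a - f)`. The scaling condition with `δ = R⁻¹`
integrates to `R D ≤ T R^{1/p} ∫₀ˣ (f - f x) = T R^{1/p} (D - A + x (f a - f x))`, and the chord
bound from convexity gives `A ≥ (x - a) (f a - f x) / 2`; under `T R^{1/p} ≤ (R - 1) / 2` these two
inequalities force `D ≤ A`. All integrals are finite: iterating the scaling condition along
`x / 2ⁿ` shows `f u ≤ C + M u^{-1/p}` near `0`.
-/

open MeasureTheory Set Real

open Filter Topology ProbabilityTheory intervalIntegral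

lemma monotoneOn_sInf_setOf_le {F : ℝ → ℝ} (hbot : Tendsto F atBot (𝓝 0))
    (htop : Tendsto F atTop (𝓝 1)) :
    MonotoneOn (fun u ↦ sInf {t | u ≤ F t}) (Ioo 0 1) := by
  intro u hu v hv huv
  obtain ⟨t₀, ht₀⟩ := eventually_atBot.1 (hbot.eventually (eventually_lt_nhds hu.1))
  refine csInf_le_csInf ⟨t₀, fun t ht ↦ ?_⟩ (htop.eventually (eventually_ge_nhds hv.2)).exists
    fun t ht ↦ huv.trans ht
  by_contra! h
  exact (ht₀ t h.le).not_ge ht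

lemma quantile_eq_sInf_cdf_s9 {Ω : Type*} [MeasurableSpace Ω] (P : Measure Ω)
    [IsProbabilityMeasure P] {Y : Ω → ℝ} (hY : Measurable Y) (u : ℝ) :
    quantile P Y u = sInf {t | u ≤ cdf (P.map Y) t} := by
  have := Measure.isProbabilityMeasure_map (μ := P) hY.aemeasurable
  simp only [quantile, cdf_eq_real, map_measureReal_apply hY measurableSet_Iic]
  rfl

lemma monotoneOn_quantile {Ω : Type*} [MeasurableSpace Ω] (P : Measure Ω)
    [IsProbabilityMeasure P] {Y : Ω → ℝ} (hY : Measurable Y) :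
    MonotoneOn (quantile P Y) (Ioo 0 1) := by
  simp only [funext (quantile_eq_sInf_cdf_s9 P hY)]
  exact monotoneOn_sInf_setOf_le (tendsto_cdf_atBot _) (tendsto_cdf_atTop _)

lemma ConvexOn.comp_const_sub {f : ℝ → ℝ} {s : Set ℝ} (hf : ConvexOn ℝ s f) (c : ℝ) :
    ConvexOn ℝ ((c - ·) ⁻¹' s) (fun u ↦ f (c - u)) :=
  hf.comp_affineMap (AffineMap.const ℝ ℝ c - AffineMap.id ℝ ℝ)

lemma le_add_div_mul_pow_of_le_add_mul_pow {b : ℕ → ℝ} {C r : ℝ} (hC : 0 ≤ C) (hr : 1 < r)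
    (hb : ∀ n, b (n + 1) ≤ b n + C * r ^ n) (n : ℕ) :
    b n ≤ b 0 + C / (r - 1) * r ^ n := by
  induction n with
  | zero => simpa using div_nonneg hC (sub_pos.2 hr).le
  | succ n ih =>
    have : C / (r - 1) * r ^ (n + 1) = C / (r - 1) * r ^ n + C * r ^ n := by
      field_simp [(sub_pos.2 hr).ne']; ring
    linarith [hb n]

lemma AntitoneOn.intervalIntegrable_of_le_add_mul_rpow_neg {f : ℝ → ℝ} {s C M x : ℝ}
    (hf : AntitoneOn f (Ioc 0 x)) (hx : 0 < x) (hs : s < 1) (hM : 0 ≤ M)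
    (hbd : ∀ u ∈ Ioc 0 x, f u ≤ C + M * u ^ (-s)) :
    IntervalIntegrable f volume 0 x := by
  rw [intervalIntegrable_iff_integrableOn_Ioc_of_le hx.le]
  have hg : IntegrableOn (fun u ↦ (|f x| + |C|) + M * u ^ (-s)) (Ioc 0 x) := by
    rw [← intervalIntegrable_iff_integrableOn_Ioc_of_le hx.le]
    exact intervalIntegrable_const.add
      ((intervalIntegral.intervalIntegrable_rpow' (by linarith)).const_mul M)
  refine hg.mono' (aemeasurable_restrict_of_antitoneOn measurableSet_Ioc hf).aestronglyMeasurable ?_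
  filter_upwards [ae_restrict_mem measurableSet_Ioc] with u hu
  have hfx : f x ≤ f u := hf hu ⟨hx, le_rfl⟩ hu.2
  have := hbd u hu
  have : 0 ≤ M * u ^ (-s) := mul_nonneg hM (rpow_nonneg hu.1.le _)
  rw [Real.norm_eq_abs, abs_le]
  constructor <;> linarith [neg_abs_le (f x), le_abs_self C, abs_nonneg (f x), abs_nonneg C]

lemma ConvexOn.intervalIntegral_le_trapezoid {f : ℝ → ℝ} {a b : ℝ} (hf : ConvexOn ℝ (Icc a b) f)
    (hab : a < b) (hint : IntervalIntegrable f volume a b) :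
    ∫ u in a..b, f u ≤ (b - a) * ((f a + f b) / 2) := by
  have hba : 0 < b - a := sub_pos.2 hab
  have hchord : ∀ u ∈ Ioo a b, f u ≤ f a + (u - a) / (b - a) * (f b - f a) := by
    intro u hu
    have ht₀ : 0 ≤ (u - a) / (b - a) := div_nonneg (by linarith [hu.1]) hba.le
    have ht₁ : 0 ≤ 1 - (u - a) / (b - a) := by
      rw [sub_nonneg, div_le_one hba]; linarith [hu.2]
    have h := hf.2 (left_mem_Icc.2 hab.le) (right_mem_Icc.2 hab.le) ht₁ ht₀ (by ring)
    have hu' : (1 - (u - a) / (b - a)) • a + ((u - a) / (b - a)) • b = u := by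
      simp only [smul_eq_mul]; field_simp; ring
    rw [hu', smul_eq_mul, smul_eq_mul] at h
    linarith
  have hlin : IntervalIntegrable (fun u ↦ (u - a) / (b - a) * (f b - f a)) volume a b := by
    apply Continuous.intervalIntegrable; fun_prop
  calc ∫ u in a..b, f u ≤ ∫ u in a..b, (f a + (u - a) / (b - a) * (f b - f a)) :=
        integral_mono_on_of_le_Ioo hab.le hint (intervalIntegrable_const.add hlin) hchord
    _ = (b - a) * ((f a + f b) / 2) := by
        rw [integral_add intervalIntegrable_const hlin, intervalIntegral.integral_mul_const,
          intervalIntegral.integral_div, integral_comp_sub_right (fun u ↦ u), integral_id,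
          intervalIntegral.integral_const]
        simp only [smul_eq_mul, sub_self]
        field_simp
        ring

section Scaling

variable {f : ℝ → ℝ} {s T : ℝ}

lemma apply_div_two_pow_sub_le_of_scaling
    (hreg : ∀ δ ∈ Ioo (0 : ℝ) 1, ∀ x ∈ Ioo (0 : ℝ) 1, ∀ y ∈ Ioo (0 : ℝ) 1,
      |f (δ * x) - f (δ * y)| ≤ T * δ ^ (-s) * |f x - f y|)
    {x : ℝ} (hx : x ∈ Ioo 0 1) (n : ℕ) :
    f (x / 2 ^ (n + 2)) - f (x / 2 ^ (n + 1)) ≤ T * |f (x / 2) - f x| * (2 ^ s) ^ (n + 1) := by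
  have hδ : (2 ^ (n + 1) : ℝ)⁻¹ ∈ Ioo (0 : ℝ) 1 :=
    ⟨by positivity, inv_lt_one_of_one_lt₀ (one_lt_pow₀ one_lt_two n.succ_ne_zero)⟩
  have h := hreg _ hδ (x / 2) ⟨half_pos hx.1, (half_lt_self hx.1).trans hx.2⟩ x hx
  have e₁ : (2 ^ (n + 1) : ℝ)⁻¹ * (x / 2) = x / 2 ^ (n + 2) := by field_simp; ring
  have e₂ : (2 ^ (n + 1) : ℝ)⁻¹ * x = x / 2 ^ (n + 1) := by field_simp
  rw [e₁, e₂, inv_rpow (by positivity), rpow_neg (by positivity), inv_inv,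
    ← rpow_pow_comm zero_le_two] at h
  linarith [le_abs_self (f (x / 2 ^ (n + 2)) - f (x / 2 ^ (n + 1)))]

lemma exists_le_add_mul_rpow_neg (hanti : AntitoneOn f (Ioo 0 1)) (hs : 0 < s) (hT : 0 ≤ T)
    (hreg : ∀ δ ∈ Ioo (0 : ℝ) 1, ∀ x ∈ Ioo (0 : ℝ) 1, ∀ y ∈ Ioo (0 : ℝ) 1,
      |f (δ * x) - f (δ * y)| ≤ T * δ ^ (-s) * |f x - f y|)
    {x : ℝ} (hx : x ∈ Ioo 0 1) :
    ∃ C M, 0 ≤ M ∧ ∀ u ∈ Ioc 0 x, f u ≤ C + M * u ^ (-s) := by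
  set r : ℝ := 2 ^ s
  have hr : 1 < r := one_lt_rpow one_lt_two hs
  set C := T * |f (x / 2) - f x| * r
  have hC : 0 ≤ C := by positivity
  have hK : 0 ≤ C / (r - 1) := div_nonneg hC (sub_pos.2 hr).le
  have hdyadic (n : ℕ) : f (x / 2 ^ (n + 1)) ≤ f (x / 2) + C / (r - 1) * r ^ n := by
    refine le_add_div_mul_pow_of_le_add_mul_pow (b := fun n ↦ f (x / 2 ^ (n + 1))) hC hr
      (fun n ↦ ?_) n |>.trans_eq (by simp)
    have h := apply_div_two_pow_sub_le_of_scaling hreg hx n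
    rw [pow_succ r n] at h
    simp only [C]
    ring_nf at h ⊢
    linarith
  refine ⟨f (x / 2), C / (r - 1) * x ^ s, mul_nonneg hK (rpow_nonneg hx.1.le s), fun u hu ↦ ?_⟩
  obtain ⟨n, hn, hn'⟩ := exists_nat_pow_near ((one_le_div hu.1).2 hu.2) one_lt_two
  have hlt : x / 2 ^ (n + 1) < u := by
    rw [div_lt_iff₀ hu.1] at hn'
    rw [div_lt_iff₀ (by positivity)]
    linarith
  have hmem : x / 2 ^ (n + 1) ∈ Ioo (0 : ℝ) 1 :=
    ⟨by have := hx.1; positivity, (div_le_self hx.1.le (one_le_pow₀ one_le_two)).trans_lt hx.2⟩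
  have hrn : r ^ n ≤ x ^ s * u ^ (-s) := by
    calc r ^ n = ((2 : ℝ) ^ n) ^ s := rpow_pow_comm zero_le_two s n
      _ ≤ (x / u) ^ s := rpow_le_rpow (by positivity) hn hs.le
      _ = x ^ s * u ^ (-s) := by rw [div_rpow hx.1.le hu.1.le, rpow_neg hu.1.le, div_eq_mul_inv]
  calc f u ≤ f (x / 2 ^ (n + 1)) := hanti hmem ⟨hu.1, hu.2.trans_lt hx.2⟩ hlt.le
    _ ≤ f (x / 2) + C / (r - 1) * r ^ n := hdyadic n
    _ ≤ f (x / 2) + C / (r - 1) * x ^ s * u ^ (-s) := by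
        rw [mul_assoc]; gcongr

lemma mul_integral_sub_le_of_scaling (hanti : AntitoneOn f (Ioo 0 1))
    (hreg : ∀ δ ∈ Ioo (0 : ℝ) 1, ∀ x ∈ Ioo (0 : ℝ) 1, ∀ y ∈ Ioo (0 : ℝ) 1,
      |f (δ * x) - f (δ * y)| ≤ T * δ ^ (-s) * |f x - f y|)
    {R x : ℝ} (hR : 1 < R) (hx : x ∈ Ioo 0 1) (hint : IntervalIntegrable f volume 0 x) :
    R * (∫ u in 0..x / R, f u) - x * f (x / R) ≤ T * R ^ s * ((∫ u in 0..x, f u) - x * f x) := by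
  have hR₀ : 0 < R := zero_lt_one.trans hR
  have hRinv : R⁻¹ ∈ Ioo (0 : ℝ) 1 := ⟨inv_pos.2 hR₀, inv_lt_one_of_one_lt₀ hR⟩
  have hsub : uIcc 0 (x / R) ⊆ uIcc 0 x := uIcc_subset_uIcc_left <| by
    rw [uIcc_of_le hx.1.le]; exact ⟨div_nonneg hx.1.le hR₀.le, div_le_self hx.1.le hR.le⟩
  have hcomp : IntervalIntegrable (fun v ↦ f (v / R)) volume 0 x := by
    simpa [div_eq_mul_inv, hR₀.ne'] using (hint.mono_set hsub).comp_mul_right (c := R⁻¹)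
  have hpt : ∀ v ∈ Ioo 0 x, f (v / R) - f (x / R) ≤ T * R ^ s * (f v - f x) := by
    intro v hv
    have hv₁ : v ∈ Ioo (0 : ℝ) 1 := ⟨hv.1, hv.2.trans hx.2⟩
    have h := hreg R⁻¹ hRinv v hv₁ x hx
    rw [inv_rpow hR₀.le, rpow_neg hR₀.le, inv_inv, inv_mul_eq_div, inv_mul_eq_div,
      abs_of_nonneg (sub_nonneg.2 (hanti hv₁ hx hv.2.le))] at h
    exact (le_abs_self _).trans h
  have h := integral_mono_on_of_le_Ioo hx.1.le (hcomp.sub intervalIntegrable_const)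
    ((hint.sub intervalIntegrable_const).const_mul _) hpt
  rw [integral_sub hcomp intervalIntegrable_const, integral_comp_div _ hR₀.ne',
    intervalIntegral.integral_const_mul, integral_sub hint intervalIntegrable_const] at h
  simpa using h

theorem integral_le_mul_of_convexOn_of_scaling (hanti : AntitoneOn f (Ioo 0 1))
    (hconv : ConvexOn ℝ (Ioo 0 1) f) (hs : 0 < s) (hs₁ : s < 1) (hT : 0 ≤ T)
    (hreg : ∀ δ ∈ Ioo (0 : ℝ) 1, ∀ x ∈ Ioo (0 : ℝ) 1, ∀ y ∈ Ioo (0 : ℝ) 1,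
      |f (δ * x) - f (δ * y)| ≤ T * δ ^ (-s) * |f x - f y|)
    {R : ℝ} (hR : 1 < R) (hTR : T * R ^ s ≤ (R - 1) / 2) {x : ℝ} (hx : x ∈ Ioo 0 1) :
    ∫ u in 0..x, f u ≤ x * f (x / R) := by
  have hR₀ : 0 < R := zero_lt_one.trans hR
  set a := x / R
  have ha : 0 < a := div_pos hx.1 hR₀
  have hax : a < x := div_lt_self hx.1 hR
  have hRa : R * a = x := mul_div_cancel₀ x hR₀.ne'
  obtain ⟨C, M, hM, hbd⟩ := exists_le_add_mul_rpow_neg hanti hs hT hreg hx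
  have hint : IntervalIntegrable f volume 0 x :=
    (hanti.mono fun u hu ↦ ⟨hu.1, hu.2.trans_lt hx.2⟩).intervalIntegrable_of_le_add_mul_rpow_neg
      hx.1 hs₁ hM hbd
  have hint₀ : IntervalIntegrable f volume 0 a :=
    hint.mono_set (uIcc_subset_uIcc_left (by rw [uIcc_of_le hx.1.le]; exact ⟨ha.le, hax.le⟩))
  have hint₁ : IntervalIntegrable f volume a x :=
    hint.mono_set (uIcc_subset_uIcc_right (by rw [uIcc_of_le hx.1.le]; exact ⟨ha.le, hax.le⟩))
  have hsplit := integral_add_adjacent_intervals hint₀ hint₁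
  set I₀ := ∫ u in 0..a, f u
  set I₁ := ∫ u in a..x, f u
  have hD : R * I₀ - x * f a ≤ T * R ^ s * (I₀ + I₁ - x * f x) := by
    rw [hsplit]; exact mul_integral_sub_le_of_scaling hanti hreg hR hx hint
  have hA : I₁ ≤ (x - a) * ((f a + f x) / 2) :=
    (hconv.subset (Icc_subset_Ioo ha hx.2) (convex_Icc a x)).intervalIntegral_le_trapezoid hax hint₁
  have hc : f x ≤ f a := hanti ⟨ha, hax.trans hx.2⟩ hx hax.le
  have hK : T * R ^ s < R := by linarith
  have key : (R - T * R ^ s) * (I₀ + I₁ - x * f a) ≤ 0 := by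
    linarith [mul_le_mul_of_nonneg_left hA hR₀.le,
      mul_le_mul_of_nonneg_right hTR (mul_nonneg hx.1.le (sub_nonneg.2 hc)),
      congrArg (· * (f a + f x)) hRa]
  rw [← hsplit]
  linarith [nonpos_of_mul_nonpos_right key (sub_pos.2 hK)]

end Scaling

theorem stmt9_general {Ω : Type*} [MeasurableSpace Ω] (P : Measure Ω) [IsProbabilityMeasure P]
    (Y : Ω → ℝ) (hY : Measurable Y)
    (hconv : ConvexOn ℝ (Set.Ioo (0 : ℝ) 1) (quantile P Y))
    (p T : ℝ) (hp : 1 < p) (hT : 1 ≤ T)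
    (hreg : ∀ δ ∈ Set.Ioo (0 : ℝ) 1, ∀ x ∈ Set.Ioo (0 : ℝ) 1, ∀ y ∈ Set.Ioo (0 : ℝ) 1,
      |quantile P Y (1 - δ * x) - quantile P Y (1 - δ * y)|
        ≤ T * δ ^ (-(1 / p)) * |quantile P Y (1 - x) - quantile P Y (1 - y)|)
    (R : ℝ) (hR : 1 < R) (hTR : T ≤ (R - 1) * R ^ (-(1 / p)) / 2) :
    ∀ x ∈ Set.Ioo (0 : ℝ) 1,
      x⁻¹ * (∫ u in (0 : ℝ)..x, quantile P Y (1 - u)) ≤ quantile P Y (1 - x / R) := by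
  intro x hx
  have hanti : AntitoneOn (fun u ↦ quantile P Y (1 - u)) (Ioo 0 1) := fun u hu v hv huv ↦
    monotoneOn_quantile P hY ⟨by linarith [hv.2], by linarith [hv.1]⟩
      ⟨by linarith [hu.2], by linarith [hu.1]⟩ (by linarith)
  have hconv' : ConvexOn ℝ (Ioo 0 1) (fun u ↦ quantile P Y (1 - u)) := by
    simpa using hconv.comp_const_sub 1
  have hp' : 0 < 1 / p := by positivity
  have hTR' : T * R ^ (1 / p) ≤ (R - 1) / 2 := by
    have hRp : 0 < R ^ (1 / p) := rpow_pos_of_pos (by linarith) _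
    rw [rpow_neg (by linarith)] at hTR
    calc T * R ^ (1 / p) ≤ (R - 1) * (R ^ (1 / p))⁻¹ / 2 * R ^ (1 / p) := by gcongr
      _ = (R - 1) / 2 := by field_simp
  rw [inv_mul_le_iff₀ hx.1]
  exact integral_le_mul_of_convexOn_of_scaling hanti hconv' hp' ((div_lt_one (by linarith)).2 hp)
    (by linarith) hreg hR hTR' hx

/-- Proposition 8 (areeae): if `H_Y` is convex, `|H_Y^*(δx) - H_Y^*(δy)| ≤ T δ^{-1/p}
|H_Y^*(x) - H_Y^*(y)|` for all `δ, x, y ∈ (0,1)`, and `R > 1` satisfies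
`T ≤ (R-1) R^{-1/p} / 2`, then `H_Y^*(x/R) ≥ x⁻¹ ∫_0^x H_Y^*(u) du` for all `x ∈ (0,1)`. -/
theorem stmt9 {Ω : Type*} [MeasurableSpace Ω] (P : Measure Ω) [IsProbabilityMeasure P]
    (Y : Ω → ℝ) (hY : Measurable Y) (hint : Integrable Y P)
    (hconv : ConvexOn ℝ (Set.Ioo (0 : ℝ) 1) (quantile P Y))
    (p T : ℝ) (hp : 1 < p) (hT : 1 ≤ T)
    (hreg : ∀ δ ∈ Set.Ioo (0 : ℝ) 1, ∀ x ∈ Set.Ioo (0 : ℝ) 1, ∀ y ∈ Set.Ioo (0 : ℝ) 1,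
      |quantile P Y (1 - δ * x) - quantile P Y (1 - δ * y)|
        ≤ T * δ ^ (-(1 / p)) * |quantile P Y (1 - x) - quantile P Y (1 - y)|)
    (R : ℝ) (hR : 1 < R) (hTR : T ≤ (R - 1) * R ^ (-(1 / p)) / 2) :
    ∀ x ∈ Set.Ioo (0 : ℝ) 1,
      x⁻¹ * (∫ u in (0 : ℝ)..x, quantile P Y (1 - u)) ≤ quantile P Y (1 - x / R) :=
  stmt9_general P Y hY hconv p T hp hT hreg R hR hTR
end

section
/- Let μ be a probability measure on ℝ with ∫ max{0,x} dμ(x) < ∞, let t ∈ ℝ with t > ∫ x dμ(x), and suppose μ((t,∞)) > 0. Then the function g(a) = ∫ max{0, a(x−t)+1} dμ(x) on (0,∞) is convex, and its one-sided derivative at a equals ∫_{t−1/a}^∞ (x−t) dμ(x). -/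
/-!
For each `x`, `a ↦ max 0 (a (x - t) + 1)` is convex, so `g` is convex as an integral of convex
functions. Its left derivative at `a > 0` is `x - t` when `a (x - t) + 1 ≥ 0`, i.e. `x ≥ t - 1/a`,
and `0` otherwise; dominated convergence of the difference quotients passes this under the
integral. Only the positive part of `x` is integrable, but for `b` near `a` the integrand
vanishes at both `a` and `b` once `x < t - 2/a`, so the quotients are dominated by
`max 0 (x - t) + 2/a`.
-/

open MeasureTheory Set Filter Topology

section

variable {α : Type*} [MeasurableSpace α] {μ : Measure α}

theorem ConvexOn.integral {E : Type*} [AddCommGroup E] [Module ℝ E] {s : Set E} {F : E → α → ℝ}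
    (hs : Convex ℝ s) (hF : ∀ᵐ x ∂μ, ConvexOn ℝ s (F · x))
    (hF_int : ∀ a ∈ s, Integrable (F a) μ) :
    ConvexOn ℝ s (fun a => ∫ x, F a x ∂μ) := by
  refine ⟨hs, fun a ha b hb p q hp hq hpq => ?_⟩
  calc ∫ x, F (p • a + q • b) x ∂μ ≤ ∫ x, (p • F a x + q • F b x) ∂μ :=
        integral_mono_ae (hF_int _ (hs ha hb hp hq hpq))
          (((hF_int a ha).smul p).add ((hF_int b hb).smul q))
          (hF.mono fun x hx => hx.2 ha hb hp hq hpq)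
    _ = p • ∫ x, F a x ∂μ + q • ∫ x, F b x ∂μ := by
        rw [integral_add (f := fun x => p • F a x) (g := fun x => q • F b x)
          ((hF_int a ha).smul p) ((hF_int b hb).smul q), integral_smul,
          integral_smul]

theorem hasDerivWithinAt_integral_of_dominated_loc_of_lip {E : Type*} [NormedAddCommGroup E]
    [NormedSpace ℝ E] [CompleteSpace E] {F : ℝ → α → E} {F' : α → E} {s : Set ℝ} {a : ℝ}
    {bound : α → ℝ} (hF_int : ∀ᶠ b in 𝓝 a, Integrable (F b) μ)
    (h_lip : ∀ᶠ b in 𝓝[s] a, ∀ᵐ x ∂μ, ‖F b x - F a x‖ ≤ bound x * |b - a|)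
    (bound_integrable : Integrable bound μ)
    (h_diff : ∀ᵐ x ∂μ, HasDerivWithinAt (F · x) (F' x) s a) :
    HasDerivWithinAt (fun b => ∫ x, F b x ∂μ) (∫ x, F' x ∂μ) s a := by
  have hl : 𝓝[s \ {a}] a ≤ 𝓝 a := nhdsWithin_le_nhds
  have hFa : Integrable (F a) μ := hF_int.self_of_nhds
  have hne : ∀ᶠ b in 𝓝[s \ {a}] a, b ≠ a :=
    eventually_nhdsWithin_of_forall fun b hb => hb.2
  have h_slope_int : ∀ᶠ b in 𝓝[s \ {a}] a,
      slope (fun b => ∫ x, F b x ∂μ) a b = ∫ x, slope (F · x) a b ∂μ := by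
    filter_upwards [hl hF_int] with b hFb
    simp only [slope_def_module]
    rw [integral_smul, integral_sub hFb hFa]
  rw [hasDerivWithinAt_iff_tendsto_slope]
  refine Tendsto.congr' (h_slope_int.mono fun _ h => h.symm) <|
    tendsto_integral_filter_of_dominated_convergence bound ?_ ?_ bound_integrable ?_
  · filter_upwards [hl hF_int] with b hFb
    simp only [slope_def_module]
    exact ((hFb.sub hFa).smul (b - a)⁻¹).aestronglyMeasurable
  · filter_upwards [nhdsWithin_mono a sdiff_subset h_lip, hne] with b hb hba
    filter_upwards [hb] with x hx
    rw [slope_def_module, norm_smul, norm_inv, Real.norm_eq_abs,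
      inv_mul_le_iff₀ (abs_pos.mpr (sub_ne_zero.mpr hba)), mul_comm]
    exact hx
  · exact h_diff.mono fun x hx => hasDerivWithinAt_iff_tendsto_slope.mp hx

theorem MeasureTheory.Integrable.max_zero_mul_add [IsFiniteMeasure μ] {f : α → ℝ}
    (hf : Integrable (fun x => max 0 (f x)) μ) (hf_meas : AEStronglyMeasurable f μ)
    {a : ℝ} (ha : 0 ≤ a) (c : ℝ) :
    Integrable (fun x => max 0 (a * f x + c)) μ := by
  refine ((hf.const_mul a).add (integrable_const (max 0 c))).mono'
    (aestronglyMeasurable_const.sup ((hf_meas.const_mul a).add aestronglyMeasurable_const)) ?_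
  refine ae_of_all _ fun x => ?_
  simp only [Pi.add_apply]
  rw [Real.norm_eq_abs, abs_of_nonneg (le_max_left _ _)]
  have : a * f x ≤ a * max 0 (f x) := mul_le_mul_of_nonneg_left (le_max_right _ _) ha
  exact max_le (by positivity) (by linarith [le_max_right 0 c])

end

theorem convexOn_max_zero_mul_add (c d : ℝ) : ConvexOn ℝ univ (fun b : ℝ => max 0 (b * c + d)) :=
  (convexOn_const 0 convex_univ).sup (((LinearMap.mulRight ℝ c).convexOn convex_univ).add_const d)

theorem hasDerivWithinAt_max_zero_mul_add {a c d : ℝ} (hc : a * c + d = 0 → c ≤ 0) :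
    HasDerivWithinAt (fun b => max 0 (b * c + d)) (if 0 ≤ a * c + d then c else 0) (Iic a) a := by
  have h_lin : HasDerivAt (fun b => b * c + d) c a := by
    simpa using ((hasDerivAt_id a).mul_const c).add_const d
  have h_cont : Continuous (fun b : ℝ => b * c + d) := by fun_prop
  rcases lt_trichotomy (a * c + d) 0 with h | h | h
  · rw [if_neg h.not_ge]
    refine ((hasDerivAt_const a 0).congr_of_eventuallyEq ?_).hasDerivWithinAt
    filter_upwards [h_cont.continuousAt.eventually_lt continuousAt_const h] with b hb
    exact max_eq_left hb.le
  · rw [if_pos h.ge]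
    refine h_lin.hasDerivWithinAt.congr (fun b (hb : b ≤ a) => max_eq_right ?_) (max_eq_right h.ge)
    nlinarith [hc h]
  · rw [if_pos h.le]
    refine h_lin.congr_of_eventuallyEq ?_ |>.hasDerivWithinAt
    filter_upwards [continuousAt_const.eventually_lt h_cont.continuousAt h] with b hb
    exact max_eq_right hb.le

theorem abs_max_zero_mul_add_one_sub_le {a b c : ℝ} (ha : 0 < a) (hb : a / 2 < b) :
    |max 0 (b * c + 1) - max 0 (a * c + 1)| ≤ (max 0 c + 2 / a) * |b - a| := by
  rcases le_or_gt (-(2 / a)) c with hc | hc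
  · calc |max 0 (b * c + 1) - max 0 (a * c + 1)| ≤ |(b * c + 1) - (a * c + 1)| := by
          rw [max_comm 0, max_comm 0]; exact abs_max_sub_max_le_abs _ _ _
      _ = |c| * |b - a| := by rw [← abs_mul]; ring_nf
      _ ≤ (max 0 c + 2 / a) * |b - a| := by
          gcongr
          exact abs_le.mpr ⟨by linarith [le_max_left 0 c], by linarith [le_max_right 0 c,
            (by positivity : 0 < 2 / a)]⟩
  · have hac : a * c < -2 := by
      have := mul_lt_mul_of_pos_left hc ha
      rwa [mul_neg, mul_div_cancel₀ _ ha.ne'] at this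
    have hbc : b * c < -1 := by nlinarith
    rw [max_eq_left (by linarith), max_eq_left (by linarith), sub_zero, abs_zero]
    exact mul_nonneg (by positivity) (abs_nonneg _)

theorem stmt10_general (μ : Measure ℝ) [IsProbabilityMeasure μ]
    (hpos : Integrable (fun x : ℝ => max 0 x) μ)
    (t : ℝ)
    (g : ℝ → ℝ) (hg : g = fun a => ∫ x, max 0 (a * (x - t) + 1) ∂μ) :
    ConvexOn ℝ (Set.Ioi (0 : ℝ)) g ∧
      ∀ a : ℝ, 0 < a →
        HasDerivWithinAt g (∫ x in Set.Ici (t - 1 / a), (x - t) ∂μ) (Set.Iic a) a := by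
  subst hg
  have h_int : ∀ b : ℝ, 0 ≤ b → Integrable (fun x => max 0 (b * (x - t) + 1)) μ := fun b hb =>
    (hpos.max_zero_mul_add aestronglyMeasurable_id hb (1 - b * t)).congr
      (ae_of_all _ fun x => by ring_nf)
  refine ⟨ConvexOn.integral (convex_Ioi 0)
    (ae_of_all _ fun x => (convexOn_max_zero_mul_add _ _).subset (subset_univ _) (convex_Ioi 0))
    fun b hb => h_int b hb.le, fun a ha => ?_⟩
  rw [← integral_indicator measurableSet_Ici]
  refine hasDerivWithinAt_integral_of_dominated_loc_of_lip
    (bound := fun x => max 0 (x - t) + 2 / a) ?_ ?_ ?_ ?_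
  · filter_upwards [lt_mem_nhds ha] with b hb using h_int b hb.le
  · filter_upwards [nhdsWithin_le_nhds (lt_mem_nhds (half_lt_self ha))] with b hb
    exact ae_of_all _ fun x => abs_max_zero_mul_add_one_sub_le ha hb
  · exact ((hpos.max_zero_mul_add aestronglyMeasurable_id zero_le_one (-t)).congr
      (ae_of_all _ fun x => by ring_nf)).add (integrable_const _)
  · refine ae_of_all _ fun x => ?_
    have h_kink : a * (x - t) + 1 = 0 → x - t ≤ 0 := fun h => by nlinarith
    have h_ind : (Ici (t - 1 / a)).indicator (fun x => x - t) x
        = if 0 ≤ a * (x - t) + 1 then x - t else 0 := by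
      simp only [indicator_apply, mem_Ici]
      congr 1
      rw [sub_le_comm, le_div_iff₀ ha]
      exact propext ⟨fun h => by linarith, fun h => by linarith⟩
    exact h_ind ▸ hasDerivWithinAt_max_zero_mul_add h_kink

/-- The computational core of Proposition 1, II: `g(a) = ∫ max{0, a(x-t)+1} dμ` is convex
on `(0,∞)` and its one-sided derivative at `a` equals `∫_{[t-1/a,∞)} (x-t) dμ`. -/
theorem stmt10 (μ : Measure ℝ) [IsProbabilityMeasure μ]
    (hpos : Integrable (fun x : ℝ => max 0 x) μ)
    (t : ℝ)
    (ht : (¬ Integrable (fun x : ℝ => x) μ) ∨ (∫ x, x ∂μ) < t)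
    (htail : 0 < μ (Set.Ioi t))
    (g : ℝ → ℝ) (hg : g = fun a => ∫ x, max 0 (a * (x - t) + 1) ∂μ) :
    ConvexOn ℝ (Set.Ioi (0 : ℝ)) g ∧
      ∀ a : ℝ, 0 < a →
        HasDerivWithinAt g (∫ x in Set.Ici (t - 1 / a), (x - t) ∂μ) (Set.Iic a) a :=
  stmt10_general μ hpos t g hg
end
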